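/- arXiv:1804.08547 — 9 statements merged into one kernel-verified Lean document; each statement's English description precedes it below -/
import Mathlib

section
/- Let S be a string with parsing Y_S = y₁y₂…y_c (each yᵢ nonempty, concatenation equals S) and let L = |y₁|,|y₂|,…,|y_c| be the word of phrase lengths. Then |Y_S|·H₀(Y_S) ≤ C(Y_S) + |L|·H₀(L), where C(Y_S) = ∑ᵢ -log 𝒫(yᵢ) is the parsing cost and H₀ denotes the zero-order empirical entropy (of Y_S viewed as a word over the set of distinct phrases, and of L viewed as a word over {1,…,|S|}). -/
open Finset

/-- Unnormalized zero-order empirical entropy `|w| * H₀(w)` (logs base 2). -/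
noncomputable def nH0 {α : Type*} [DecidableEq α] (w : List α) : ℝ :=
  -∑ a ∈ w.toFinset, (w.count a : ℝ) * Real.logb 2 ((w.count a : ℝ) / (w.length : ℝ))

/-- Number of (possibly overlapping) occurrences of `v` as a substring of `S`,
with the convention `|S|_ε = |S|`. -/
def occ {α : Type*} [DecidableEq α] (S v : List α) : ℕ :=
  if v = [] then S.length
  else ((List.range S.length).filter (fun i => (S.drop i).take v.length = v)).length

/-- The phrase probability `𝒫(y) = ∏_{j=1}^{|y|} |S|_{y[1..j]} / |S|_{y[1..j-1]}`. -/
noncomputable def phraseProb {α : Type*} [DecidableEq α] (S y : List α) : ℝ :=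
  ∏ j ∈ Finset.range y.length,
    ((occ S (y.take (j + 1)) : ℝ) / (occ S (y.take j) : ℝ))

/-- The phrase cost `C(y) = -log 𝒫(y)`. -/
noncomputable def phraseCost {α : Type*} [DecidableEq α] (S y : List α) : ℝ :=
  -Real.logb 2 (phraseProb S y)

/-- The parsing cost `C(Y_S) = ∑ᵢ C(yᵢ)`. -/
noncomputable def parseCost {α : Type*} [DecidableEq α] (S : List α) (Y : List (List α)) : ℝ :=
  (Y.map (phraseCost S)).sum

/-!
Gibbs' inequality: `|w| H₀(w) ≤ ∑_{a ∈ w} -log q(a)` for every weight `q` with total mass at most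
one on the letters of `w`. Take `q(y) = (|S|_y / |S|) · (|L|_{|y|} / |Y|)`. The cross entropy of
`Y` against `q` splits into `C(Y)` (since `𝒫(y) = |S|_y / |S|` by telescoping) plus
`|L| H₀(L)`, and `q` has mass at most one because occurrences of distinct phrases of a common
length start at distinct positions of `S`, so `∑_{|y| = ℓ} |S|_y ≤ |S|`.
-/
lemma occ_eq_card_filter {α : Type*} [DecidableEq α] (S : List α) {v : List α} (hv : v ≠ []) :
    occ S v = #{i ∈ range S.length | (S.drop i).take v.length = v} := by
  rw [occ, if_neg hv]
  rfl

lemma occ_pos_of_isInfix {α : Type*} [DecidableEq α] {S v : List α} (hS : S ≠ [])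
    (hv : v <:+: S) : 0 < occ S v := by
  rcases eq_or_ne v [] with rfl | hne
  · simpa [occ] using List.length_pos_iff.mpr hS
  obtain ⟨s, t, rfl⟩ := hv
  rw [occ_eq_card_filter _ hne, card_pos]
  refine ⟨s.length, mem_filter.mpr ⟨?_, ?_⟩⟩
  · have := List.length_pos_iff.mpr hne
    simp only [mem_range, List.length_append]
    omega
  · simp [List.append_assoc]

lemma sum_occ_le_length {α : Type*} [DecidableEq α] (S : List α) (T : Finset (List α)) (ℓ : ℕ)
    (hT : ∀ a ∈ T, a ≠ []) (hlen : ∀ a ∈ T, a.length = ℓ) :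
    ∑ a ∈ T, occ S a ≤ S.length := by
  set F : List α → Finset ℕ := fun a => {i ∈ range S.length | (S.drop i).take a.length = a}
  have hdisj : (T : Set (List α)).PairwiseDisjoint F := by
    intro a ha b hb hab
    refine disjoint_left.mpr fun i hia hib => hab ?_
    simp only [F, mem_filter] at hia hib
    rw [← hia.2, ← hib.2, hlen a ha, hlen b hb]
  calc ∑ a ∈ T, occ S a = #(T.biUnion F) := by
        rw [card_biUnion hdisj]
        exact sum_congr rfl fun a ha => occ_eq_card_filter S (hT a ha)
    _ ≤ #(range S.length) := card_le_card (biUnion_subset.mpr fun _ _ => filter_subset _ _)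
    _ = S.length := card_range _

lemma phraseCost_eq_neg_logb_occ_div {α : Type*} [DecidableEq α] {S v : List α} (hS : S ≠ [])
    (hv : v <:+: S) : phraseCost S v = -Real.logb 2 (occ S v / S.length) := by
  have hocc : ∀ j, (occ S (v.take j) : ℝ) ≠ 0 := fun j =>
    Nat.cast_ne_zero.mpr (occ_pos_of_isInfix hS ((v.take_prefix j).isInfix.trans hv)).ne'
  have hlen : (S.length : ℝ) ≠ 0 := by simpa [occ] using hocc 0
  rw [phraseCost, phraseProb, Real.logb_prod _ _ fun j _ => div_ne_zero (hocc _) (hocc _),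
    Real.logb_div (by simpa using hocc v.length) hlen]
  simp_rw [Real.logb_div (hocc _) (hocc _)]
  rw [sum_range_sub (fun j => Real.logb 2 (occ S (v.take j)))]
  simp [occ]

lemma nH0_eq_sum_map {α : Type*} [DecidableEq α] (w : List α) :
    nH0 w = (w.map fun a => -Real.logb 2 (w.count a / w.length)).sum := by
  rw [nH0, sum_list_map_count, ← sum_neg_distrib]
  simp only [nsmul_eq_mul, mul_neg]

/-- `log x ≤ x - 1` at `x = q n / c`: the termwise form of Gibbs' inequality. -/
lemma neg_mul_logb_div_le {c n q : ℝ} (hc : 0 < c) (hn : 0 < n) (hq : 0 < q) :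
    -(c * Real.logb 2 (c / n)) ≤ c * -Real.logb 2 q + (q * n - c) / Real.log 2 := by
  have hlog := Real.log_le_sub_one_of_pos (show 0 < q * n / c by positivity)
  rw [Real.log_div (by positivity) hc.ne', Real.log_mul hq.ne' hn.ne', le_sub_iff_add_le,
    le_div_iff₀ hc] at hlog
  simp only [Real.logb, Real.log_div hc.ne' hn.ne', ← neg_div, mul_div_assoc', ← add_div,
    div_le_div_iff_of_pos_right (Real.log_pos one_lt_two)]
  linarith

theorem nH0_le_sum_map_neg_logb {α : Type*} [DecidableEq α] (w : List α) (q : α → ℝ)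
    (hq : ∀ a ∈ w, 0 < q a) (hsum : ∑ a ∈ w.toFinset, q a ≤ 1) :
    nH0 w ≤ (w.map fun a => -Real.logb 2 (q a)).sum := by
  have hn : ∑ a ∈ w.toFinset, (w.count a : ℝ) = w.length := by
    exact_mod_cast List.sum_toFinset_count_eq_length w
  have hterm : ∀ a ∈ w.toFinset, -((w.count a : ℝ) * Real.logb 2 (w.count a / w.length)) ≤
      w.count a * -Real.logb 2 (q a) + (q a * w.length - w.count a) / Real.log 2 := by
    intro a ha
    have ha := List.mem_toFinset.mp ha
    exact neg_mul_logb_div_le (by exact_mod_cast List.count_pos_iff.mpr ha)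
      (by exact_mod_cast List.length_pos_of_mem ha) (hq a ha)
  calc nH0 w ≤ ∑ a ∈ w.toFinset,
        (w.count a * -Real.logb 2 (q a) + (q a * w.length - w.count a) / Real.log 2) := by
        rw [nH0, ← sum_neg_distrib]
        exact sum_le_sum hterm
    _ = (w.map fun a => -Real.logb 2 (q a)).sum +
        ((∑ a ∈ w.toFinset, q a) - 1) * w.length / Real.log 2 := by
        rw [sum_add_distrib, sum_list_map_count, ← sum_div, sum_sub_distrib, ← sum_mul, hn]
        simp only [nsmul_eq_mul]
        ring
    _ ≤ (w.map fun a => -Real.logb 2 (q a)).sum := by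
        have : ((∑ a ∈ w.toFinset, q a) - 1) * w.length / Real.log 2 ≤ 0 :=
          div_nonpos_of_nonpos_of_nonneg
            (mul_nonpos_of_nonpos_of_nonneg (by linarith) (by positivity))
            (Real.log_nonneg one_le_two)
        linarith

theorem nH0_le_sum_map_neg_logb_add_nH0_map {α β : Type*} [DecidableEq α] [DecidableEq β]
    (w : List α) (f : α → β) (p : α → ℝ) (hp : ∀ a ∈ w, 0 < p a)
    (hfiber : ∀ b, ∑ a ∈ w.toFinset with f a = b, p a ≤ 1) :
    nH0 w ≤ (w.map fun a => -Real.logb 2 (p a)).sum + nH0 (w.map f) := by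
  set d : β → ℝ := fun b => (w.map f).count b / w.length
  have hd : ∀ a ∈ w, 0 < d (f a) := fun a ha => by
    have := List.count_pos_iff.mpr (List.mem_map_of_mem (f := f) ha)
    have := List.length_pos_of_mem ha
    positivity
  have hsplit : (w.map fun a => -Real.logb 2 (p a)).sum + nH0 (w.map f) =
      (w.map fun a => -Real.logb 2 (p a * d (f a))).sum := by
    rw [nH0_eq_sum_map, List.map_map, List.length_map, ← List.sum_map_add]
    congr 1
    refine List.map_congr_left fun a ha => ?_
    simp only [Function.comp, d, Real.logb_mul (hp a ha).ne' (hd a ha).ne']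
    ring
  rw [hsplit]
  refine nH0_le_sum_map_neg_logb w _ (fun a ha => mul_pos (hp a ha) (hd a ha)) ?_
  have hmaps : ∀ a ∈ w.toFinset, f a ∈ (w.map f).toFinset := fun a ha =>
    List.mem_toFinset.mpr (List.mem_map_of_mem (List.mem_toFinset.mp ha))
  calc ∑ a ∈ w.toFinset, p a * d (f a)
      = ∑ b ∈ (w.map f).toFinset, (∑ a ∈ w.toFinset with f a = b, p a) * d b := by
        rw [← sum_fiberwise_of_maps_to hmaps]
        refine sum_congr rfl fun b _ => ?_
        rw [sum_mul]
        exact sum_congr rfl fun a ha => by rw [(mem_filter.mp ha).2]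
    _ ≤ ∑ b ∈ (w.map f).toFinset, d b :=
        sum_le_sum fun b _ => mul_le_of_le_one_left (by positivity) (hfiber b)
    _ ≤ 1 := by
        simp only [d]
        rw [← sum_div]
        push_cast [← Nat.cast_sum, List.sum_toFinset_count_eq_length]
        simpa using div_self_le_one (w.length : ℝ)

theorem stmt2 {Γ : Type*} [DecidableEq Γ] (S : List Γ) (Y : List (List Γ))
    (hY : Y.flatten = S) (hne : ∀ y ∈ Y, y ≠ []) :
    nH0 Y ≤ parseCost S Y + nH0 (Y.map List.length) := by
  have hinfix : ∀ y ∈ Y, y <:+: S := fun y hy => hY ▸ List.infix_of_mem_flatten hy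
  have hS : ∀ y ∈ Y, S ≠ [] := fun y hy h =>
    hne y hy (List.eq_nil_of_infix_nil (h ▸ hinfix y hy))
  have hcost : parseCost S Y = (Y.map fun y => -Real.logb 2 (occ S y / S.length)).sum :=
    congrArg List.sum <| List.map_congr_left fun y hy =>
      phraseCost_eq_neg_logb_occ_div (hS y hy) (hinfix y hy)
  rw [hcost]
  refine nH0_le_sum_map_neg_logb_add_nH0_map Y List.length _ (fun y hy => ?_) fun ℓ => ?_
  · have := occ_pos_of_isInfix (hS y hy) (hinfix y hy)
    have := List.length_pos_iff.mpr (hS y hy)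
    positivity
  · have hsum := sum_occ_le_length S {y ∈ Y.toFinset | y.length = ℓ} ℓ
      (fun y hy => hne y (List.mem_toFinset.mp (mem_filter.mp hy).1))
      (fun y hy => (mem_filter.mp hy).2)
    rw [← sum_div]
    exact div_le_one_of_le₀ (by exact_mod_cast hsum) (by positivity)
end

section
/- Let S be a string with |S| = n, Y_S a parsing of S, and L = Lengths(Y_S) the word of phrase lengths (so |L| = |Y_S| and the entries of L sum to n). Then |L|·H₀(L) ≤ |L|·log(n/|L|) + |L|·(1 + log e). -/
/-!
Gibbs' inequality bounds `|L| H₀(L)` by the cross entropy of the letter frequencies of `L`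
against any subprobability on `ℕ`. Against the geometric distribution
`q k = (m + 1)⁻¹ (m / (m + 1)) ^ k` of mean `m = n / |L|`, the cross entropy depends on `L` only
through `|L|` and `∑ L = n`, and equals `|L| (log (m + 1) + m log ((m + 1) / m))`.
Finally `m log (1 + 1 / m) ≤ log e`, and since phrases are nonempty `m ≥ 1`, so
`log (m + 1) ≤ log (2m) = 1 + log m`.
-/

open Finset

open Real

theorem mul_neg_logb_div_le {c N q : ℝ} (hc : 0 < c) (hN : 0 < N) (hq : 0 < q) :
    c * -logb 2 (c / N) ≤ c * -logb 2 q + (N * q - c) / log 2 := by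
  have hlog : log (N * q / c) ≤ N * q / c - 1 := log_le_sub_one_of_pos (by positivity)
  rw [log_div (by positivity) hc.ne', log_mul hN.ne' hq.ne'] at hlog
  have hterm : c * (log q - log (c / N)) ≤ N * q - c := by
    rw [log_div hc.ne' hN.ne']
    calc c * (log q - (log c - log N)) = c * (log N + log q - log c) := by ring
      _ ≤ c * (N * q / c - 1) := mul_le_mul_of_nonneg_left hlog hc.le
      _ = N * q - c := by field_simp
  have hsplit : c * -logb 2 (c / N) = c * -logb 2 q + c * (log q - log (c / N)) / log 2 := by
    simp only [logb]; ring
  rw [hsplit]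
  gcongr

theorem nH0_le_sum_count_mul_neg_logb {α : Type*} [DecidableEq α] (w : List α) {q : α → ℝ}
    (hq : ∀ a ∈ w, 0 < q a) (hsum : ∑ a ∈ w.toFinset, q a ≤ 1) :
    nH0 w ≤ ∑ a ∈ w.toFinset, (w.count a : ℝ) * -logb 2 (q a) := by
  have hcount : ∑ a ∈ w.toFinset, (w.count a : ℝ) = w.length := by
    exact_mod_cast List.sum_toFinset_count_eq_length w
  calc nH0 w = ∑ a ∈ w.toFinset, (w.count a : ℝ) * -logb 2 (w.count a / w.length) := by
        simp only [nH0, mul_neg, sum_neg_distrib]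
    _ ≤ ∑ a ∈ w.toFinset, ((w.count a : ℝ) * -logb 2 (q a) +
          (w.length * q a - w.count a) / log 2) := by
        refine sum_le_sum fun a ha => ?_
        rw [List.mem_toFinset] at ha
        exact mul_neg_logb_div_le (by exact_mod_cast List.count_pos_iff.mpr ha)
          (by exact_mod_cast List.length_pos_of_mem ha) (hq a ha)
    _ = ∑ a ∈ w.toFinset, (w.count a : ℝ) * -logb 2 (q a) +
          w.length * (∑ a ∈ w.toFinset, q a - 1) / log 2 := by
        rw [sum_add_distrib, ← sum_div, sum_sub_distrib, ← mul_sum, hcount, mul_sub, mul_one]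
    _ ≤ ∑ a ∈ w.toFinset, (w.count a : ℝ) * -logb 2 (q a) := by
        have : w.length * (∑ a ∈ w.toFinset, q a - 1) / log 2 ≤ 0 :=
          div_nonpos_of_nonpos_of_nonneg
            (mul_nonpos_of_nonneg_of_nonpos (Nat.cast_nonneg _) (by linarith)) (log_nonneg one_le_two)
        linarith

theorem sum_mul_geometric_le_one {r : ℝ} (hr0 : 0 ≤ r) (hr1 : r < 1) (s : Finset ℕ) :
    ∑ k ∈ s, (1 - r) * r ^ k ≤ 1 := by
  rw [← mul_sum]
  calc (1 - r) * ∑ k ∈ s, r ^ k ≤ (1 - r) * ∑' k, r ^ k :=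
        mul_le_mul_of_nonneg_left
          ((summable_geometric_of_lt_one hr0 hr1).sum_le_tsum s fun k _ => pow_nonneg hr0 k)
          (by linarith)
    _ = 1 := by rw [tsum_geometric_of_lt_one hr0 hr1, mul_inv_cancel₀ (by linarith)]

theorem nH0_le_length_mul_logb_add_sum_mul_logb (L : List ℕ) {m : ℝ} (hm : 0 < m) :
    nH0 L ≤ L.length * logb 2 (m + 1) + L.sum * logb 2 ((m + 1) / m) := by
  set r := m / (m + 1) with hr
  have hr0 : 0 < r := by positivity
  have hr1 : r < 1 := (div_lt_one (by positivity)).mpr (by linarith)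
  have h1r : 1 - r = (m + 1)⁻¹ := by rw [hr]; field_simp; ring
  have hlogq : ∀ k : ℕ, -logb 2 ((1 - r) * r ^ k) = logb 2 (m + 1) + k * logb 2 ((m + 1) / m) := by
    intro k
    rw [logb_mul (by linarith) (by positivity), logb_pow, h1r, logb_inv, hr, ← inv_div, logb_inv]
    ring
  calc nH0 L ≤ ∑ k ∈ L.toFinset, (L.count k : ℝ) * -logb 2 ((1 - r) * r ^ k) :=
        nH0_le_sum_count_mul_neg_logb L (fun k _ => mul_pos (by linarith) (pow_pos hr0 k))
          (sum_mul_geometric_le_one hr0.le hr1 _)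
    _ = (L.map fun k : ℕ => logb 2 (m + 1) + k * logb 2 ((m + 1) / m)).sum := by
        simp only [hlogq, Finset.sum_list_map_count, nsmul_eq_mul]
    _ = L.length * logb 2 (m + 1) + L.sum * logb 2 ((m + 1) / m) := by
        simp [List.sum_map_add, List.sum_map_mul_right, Nat.cast_list_sum]

theorem logb_add_one_add_mul_logb_le {m : ℝ} (hm : 1 ≤ m) :
    logb 2 (m + 1) + m * logb 2 ((m + 1) / m) ≤ logb 2 m + (1 + logb 2 (exp 1)) := by
  have hm0 : 0 < m := by linarith
  have hdouble : logb 2 (m + 1) ≤ 1 + logb 2 m := by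
    calc logb 2 (m + 1) ≤ logb 2 (2 * m) := logb_le_logb_of_le one_lt_two (by linarith) (by linarith)
      _ = 1 + logb 2 m := by rw [logb_mul two_ne_zero hm0.ne', logb_self_eq_one one_lt_two]
  have hexp : m * logb 2 ((m + 1) / m) ≤ logb 2 (exp 1) := by
    have hlog : log ((m + 1) / m) ≤ 1 / m := by
      have := log_le_sub_one_of_pos (show 0 < (m + 1) / m by positivity)
      have h : (m + 1) / m - 1 = 1 / m := by field_simp; ring
      linarith
    simp only [logb, log_exp, mul_div_assoc']
    refine div_le_div_of_nonneg_right ?_ (log_nonneg one_le_two)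
    calc m * log ((m + 1) / m) ≤ m * (1 / m) := mul_le_mul_of_nonneg_left hlog hm0.le
        _ = 1 := by field_simp
  linarith

theorem stmt5 {Γ : Type*} (S : List Γ) (Y : List (List Γ))
    (hY : Y.flatten = S) (hne : ∀ y ∈ Y, y ≠ []) (L : List ℕ) (hL : L = Y.map List.length) :
    nH0 L ≤ (L.length : ℝ) * Real.logb 2 ((S.length : ℝ) / (L.length : ℝ)) +
      (L.length : ℝ) * (1 + Real.logb 2 (Real.exp 1)) := by
  have hsum : L.sum = S.length := by rw [hL, ← hY, List.length_flatten]
  have hpos : ∀ k ∈ L, 1 ≤ k := by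
    rw [hL]
    rintro _ hk
    obtain ⟨y, hy, rfl⟩ := List.mem_map.mp hk
    exact List.length_pos_iff.mpr (hne y hy)
  rcases Nat.eq_zero_or_pos L.length with hN | hN
  · simp [List.length_eq_zero_iff.mp hN, nH0]
  have hNr : (0 : ℝ) < L.length := by exact_mod_cast hN
  set m : ℝ := S.length / L.length with hm
  have hm1 : 1 ≤ m :=
    (one_le_div hNr).mpr (by exact_mod_cast hsum ▸ L.length_le_sum_of_one_le hpos)
  calc nH0 L ≤ L.length * logb 2 (m + 1) + L.sum * logb 2 ((m + 1) / m) :=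
        nH0_le_length_mul_logb_add_sum_mul_logb L (by linarith)
    _ = L.length * (logb 2 (m + 1) + m * logb 2 ((m + 1) / m)) := by
        rw [hsum, hm]; field_simp
    _ ≤ L.length * (logb 2 m + (1 + logb 2 (exp 1))) :=
        mul_le_mul_of_nonneg_left (logb_add_one_add_mul_logb_le hm1) hNr.le
    _ = _ := mul_add _ _ _
end

section
/- Removing a letter from a string never increases its unnormalized zero-order empirical entropy: if w' is obtained from w by deleting one occurrence of some letter, then |w'|·H₀(w') ≤ |w|·H₀(w). -/
open Finset

/-!
With `f x = x * logb 2 x` one has `|w|·H₀(w) = f |w| - ∑ₐ f |w|ₐ`. Adding a letter `d` to `w`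
raises the first term by `f (n + 1) - f n` and the sum by `f (c + 1) - f c`, where `c = |w|_d ≤ n = |w|`;
since `f` is convex, its increments `f (x + 1) - f x` are nondecreasing in `x`.
-/

theorem ConvexOn.map_add_sub_map_le_of_le {𝕜 : Type*} [Field 𝕜] [LinearOrder 𝕜]
    [IsStrictOrderedRing 𝕜] {s : Set 𝕜} {f : 𝕜 → 𝕜} (hf : ConvexOn 𝕜 s f) {x y d : 𝕜}
    (hx : x ∈ s) (hyd : y + d ∈ s) (hd : 0 ≤ d) (hxy : x ≤ y) :
    f (x + d) - f x ≤ f (y + d) - f y := by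
  rcases hxy.eq_or_lt with rfl | hxy
  · rfl
  have hL : 0 < y + d - x := by linarith
  -- `x + d` and `y` are the two points of `[x, y + d]` with swapped barycentric weights.
  set a := (y - x) / (y + d - x)
  set b := d / (y + d - x)
  have hab : a + b = 1 := by simp only [a, b]; field_simp; ring
  have h₁ := hf.2 hx hyd (by positivity) (by positivity) hab
  have h₂ := hf.2 hx hyd (by positivity) (by positivity) ((add_comm b a).trans hab)
  have e₁ : a • x + b • (y + d) = x + d := by simp only [a, b, smul_eq_mul]; field_simp; ring
  have e₂ : b • x + a • (y + d) = y := by simp only [a, b, smul_eq_mul]; field_simp; ring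
  rw [e₁, smul_eq_mul, smul_eq_mul] at h₁
  rw [e₂, smul_eq_mul, smul_eq_mul] at h₂
  linear_combination h₁ + h₂ + (f x + f (y + d)) * hab

noncomputable def mulLogb (x : ℝ) : ℝ := x * Real.logb 2 x

theorem convexOn_mulLogb : ConvexOn ℝ (Set.Ici 0) mulLogb := by
  have h : mulLogb = fun x => (Real.log 2)⁻¹ • (x * Real.log x) := by
    funext x; simp only [mulLogb, Real.logb, smul_eq_mul]; ring
  rw [h]
  exact Real.convexOn_mul_log.smul (by positivity)

section
variable {α : Type*} [DecidableEq α]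

theorem nH0_eq_sub_sum (w : List α) {s : Finset α} (hs : w.toFinset ⊆ s) :
    nH0 w = mulLogb w.length - ∑ a ∈ s, mulLogb (w.count a) := by
  have hsum : ∑ a ∈ w.toFinset, mulLogb (w.count a) = ∑ a ∈ s, mulLogb (w.count a) :=
    sum_subset hs fun a _ ha => by
      rw [List.count_eq_zero_of_not_mem (by simpa using ha)]; simp [mulLogb]
  have hlen : ∑ a ∈ w.toFinset, (w.count a : ℝ) = w.length := by
    exact_mod_cast List.sum_toFinset_count_eq_length w
  have hterm : ∀ a ∈ w.toFinset, (w.count a : ℝ) * Real.logb 2 (w.count a / w.length)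
      = mulLogb (w.count a) - w.count a * Real.logb 2 w.length := fun a ha => by
    have hc : 0 < w.count a := List.count_pos_iff.mpr (List.mem_toFinset.mp ha)
    have hl : 0 < w.length := hc.trans_le List.count_le_length
    rw [Real.logb_div (by positivity) (by positivity), mulLogb]
    ring
  rw [nH0, sum_congr rfl hterm, sum_sub_distrib, ← sum_mul, hlen, ← hsum, mulLogb]
  ring

theorem List.Perm.nH0_eq {w w' : List α} (hp : w.Perm w') : nH0 w = nH0 w' := by
  simp only [nH0, List.toFinset_eq_of_perm w w' hp, hp.length_eq, hp.count_eq]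

theorem nH0_le_nH0_cons (d : α) (w : List α) : nH0 w ≤ nH0 (d :: w) := by
  have hs : w.toFinset ⊆ (d :: w).toFinset := by
    rw [List.toFinset_cons]; exact subset_insert d _
  rw [nH0_eq_sub_sum w hs, nH0_eq_sub_sum (d :: w) subset_rfl, List.length_cons, Nat.cast_succ]
  have hcounts : ∑ a ∈ (d :: w).toFinset, (mulLogb ((d :: w).count a) - mulLogb (w.count a))
      = mulLogb (w.count d + 1) - mulLogb (w.count d) := by
    rw [sum_eq_single_of_mem d (by simp) fun a _ had => by
      rw [List.count_cons_of_ne (Ne.symm had), sub_self], List.count_cons_self, Nat.cast_succ]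
  have hincrement : mulLogb (w.count d + 1) - mulLogb (w.count d)
      ≤ mulLogb (w.length + 1) - mulLogb w.length :=
    convexOn_mulLogb.map_add_sub_map_le_of_le (Set.mem_Ici.mpr (Nat.cast_nonneg _))
      (Set.mem_Ici.mpr (by positivity)) zero_le_one (Nat.cast_le.mpr List.count_le_length)
  rw [sum_sub_distrib] at hcounts
  linarith
end

theorem stmt8 {α : Type*} [DecidableEq α] (w w' : List α)
    (h : ∃ (u v : List α) (a : α), w = u ++ [a] ++ v ∧ w' = u ++ v) :
    nH0 w' ≤ nH0 w := by
  obtain ⟨u, v, a, rfl, rfl⟩ := h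
  rw [List.append_assoc, List.singleton_append, List.perm_middle.nH0_eq]
  exact nH0_le_nH0_cons a (u ++ v)
end

section
/- Adding one letter to a string of length at most m-1 increases the unnormalized zero-order empirical entropy by at most log m + β for some absolute constant β: if w' is obtained from w (with |w| ≤ m - 1) by inserting one letter, then |w'|·H₀(w') ≤ |w|·H₀(w) + log m + β. -/
/-!
Write `f x = x log₂ x`, so that `nH0 w = f |w| - ∑ₐ f |w|ₐ`. Inserting a letter raises `|w|` by one
and no letter count decreases; since `f` is monotone on `ℕ`, the entropy grows by at most
`f (n + 1) - f n = log₂ (n + 1) + n log₂ (1 + 1/n) ≤ log₂ m + log₂ e`.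
-/

open Finset

open Real

lemma nH0_eq_of_perm {α : Type*} [DecidableEq α] {l₁ l₂ : List α} (h : l₁.Perm l₂) :
    nH0 l₁ = nH0 l₂ := by
  simp only [nH0, h.length_eq, List.toFinset_eq_of_perm _ _ h, h.count_eq]

lemma nH0_eq_of_toFinset_subset {α : Type*} [DecidableEq α] {w : List α} {s : Finset α}
    (hs : w.toFinset ⊆ s) :
    nH0 w = w.length * logb 2 w.length - ∑ a ∈ s, (w.count a : ℝ) * logb 2 (w.count a) := by
  have hvanish : ∀ a ∈ s, a ∉ w.toFinset → (w.count a : ℝ) * logb 2 (w.count a) = 0 := by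
    intro a _ ha
    simp [List.count_eq_zero_of_not_mem (List.mem_toFinset.not.mp ha)]
  have hsplit : ∀ a ∈ w.toFinset, (w.count a : ℝ) * logb 2 (w.count a / w.length)
      = (w.count a : ℝ) * logb 2 (w.count a) - w.count a * logb 2 w.length := by
    intro a ha
    have hcount : 0 < w.count a := List.count_pos_iff.mpr (List.mem_toFinset.mp ha)
    have hlength : 0 < w.length := hcount.trans_le (List.count_le_length ..)
    rw [logb_div (by positivity) (by positivity), mul_sub]
  have hmass : ∑ a ∈ w.toFinset, (w.count a : ℝ) = w.length := by
    exact_mod_cast List.sum_toFinset_count_eq_length w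
  rw [← sum_subset hs hvanish, nH0, sum_congr rfl hsplit, sum_sub_distrib, ← sum_mul, hmass]
  ring

lemma monotone_natCast_mul_logb : Monotone fun k : ℕ ↦ (k : ℝ) * logb 2 k := by
  refine monotone_nat_of_le_succ fun k ↦ ?_
  rcases Nat.eq_zero_or_pos k with rfl | hk
  · simp
  · have hk : (1 : ℝ) ≤ k := by exact_mod_cast hk
    push_cast
    exact mul_le_mul (by linarith) (logb_le_logb_of_le one_lt_two (by linarith) (by linarith))
      (logb_nonneg one_lt_two hk) (by linarith)

lemma nH0_cons_le {α : Type*} [DecidableEq α] (c : α) (w : List α) :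
    nH0 (c :: w) ≤ nH0 w
      + ((w.length + 1) * logb 2 (w.length + 1) - w.length * logb 2 w.length) := by
  have hs : w.toFinset ⊆ (c :: w).toFinset := by simp [subset_insert]
  have hcounts : ∑ a ∈ (c :: w).toFinset, (w.count a : ℝ) * logb 2 (w.count a)
      ≤ ∑ a ∈ (c :: w).toFinset, ((c :: w).count a : ℝ) * logb 2 ((c :: w).count a) :=
    sum_le_sum fun _ _ ↦ monotone_natCast_mul_logb List.count_le_count_cons
  rw [nH0_eq_of_toFinset_subset hs, nH0_eq_of_toFinset_subset subset_rfl, List.length_cons]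
  push_cast
  linarith

lemma mul_log_add_one_sub_mul_log_le {x : ℝ} (hx : 0 ≤ x) :
    (x + 1) * log (x + 1) - x * log x ≤ log (x + 1) + 1 := by
  rcases hx.eq_or_lt with rfl | hx
  · simp
  · have hratio : log ((x + 1) / x) ≤ 1 / x := by
      have h := log_le_sub_one_of_pos (by positivity : 0 < (x + 1) / x)
      rw [add_div, div_self hx.ne'] at h ⊢
      rwa [add_sub_cancel_left] at h
    rw [log_div (by positivity) hx.ne', le_div_iff₀ hx] at hratio
    linarith

lemma mul_logb_add_one_sub_mul_logb_le {x : ℝ} (hx : 0 ≤ x) :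
    (x + 1) * logb 2 (x + 1) - x * logb 2 x ≤ logb 2 (x + 1) + 1 / log 2 := by
  simp only [logb]
  rw [← add_div, mul_div_assoc', mul_div_assoc', ← sub_div]
  exact div_le_div_of_nonneg_right (mul_log_add_one_sub_mul_log_le hx) (log_pos one_lt_two).le

theorem stmt9 :
    ∃ β : ℝ, ∀ (α : Type) [DecidableEq α] (m : ℕ) (w w' : List α),
      w.length ≤ m - 1 →
      (∃ (u v : List α) (a : α), w = u ++ v ∧ w' = u ++ [a] ++ v) →
      nH0 w' ≤ nH0 w + Real.logb 2 (m : ℝ) + β := by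
  refine ⟨1 / log 2, fun α _ m w w' hlen ⟨u, v, a, hw, hw'⟩ ↦ ?_⟩
  have hperm : w'.Perm (a :: w) := by
    subst hw hw'
    simp [List.perm_middle]
  -- `m - 1` truncates, so `m = 0` allows `w = []` and must be treated apart.
  have hlogm : logb 2 (w.length + 1) ≤ logb 2 m := by
    rcases Nat.eq_zero_or_pos m with rfl | hm
    · simp [show w.length = 0 by omega]
    · exact logb_le_logb_of_le one_lt_two (by positivity) (by exact_mod_cast (by omega))
  rw [nH0_eq_of_perm hperm]
  linarith [nH0_cons_le a w, mul_logb_add_one_sub_mul_logb_le (Nat.cast_nonneg w.length)]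
end

section
/- Let (S', G) be a full grammar in which every nonterminal except the starting symbol occurs at least twice among the right-hand sides of G and S', generating a string S. Then the sum over all nonterminals X of G (and the starting string counted as expanding to S) of |exp(X)| over all occurrences, i.e., the total length of expansions of all symbols appearing on right-hand sides including S', is at most 2|S|. -/
/-!
An occurrence of a nonterminal `Y` in a string contributes a block of length `|exp Y|` to the
expansion of that string. Summing over the right-hand sides and `S'`, every nonterminal occurs
at least twice, so `2 ∑_X |exp X| ≤ |S| + ∑_X |exp X|`, i.e. `∑_X |exp X| ≤ |S|`.
-/

open Finset

/-- Expansion of a string of terminals and nonterminals, given the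
expansion `expN` of each nonterminal. -/
def expandStr {Γ N : Type*} (expN : N → List Γ) (w : List (Γ ⊕ N)) : List Γ :=
  w.flatMap (Sum.elim (fun a => [a]) expN)

-- `List.count` on `Γ ⊕ N` uses the derived `Sum.instBEq`, for which core provides no `LawfulBEq`.
instance Sum.instLawfulBEq {α β : Type*} [BEq α] [BEq β] [LawfulBEq α] [LawfulBEq β] :
    LawfulBEq (α ⊕ β) where
  eq_of_beq {a b} h := by
    cases a <;> cases b
    case inl.inl a b => exact congrArg Sum.inl (eq_of_beq (α := α) h)
    case inr.inr a b => exact congrArg Sum.inr (eq_of_beq (α := β) h)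
    all_goals cases h
  rfl {a} := by
    cases a with
    | inl a => exact beq_self_eq_true a
    | inr b => exact beq_self_eq_true b

theorem sum_count_mul_length_le_length_expandStr {Γ N : Type*} [Fintype N] [DecidableEq Γ]
    [DecidableEq N] (expN : N → List Γ) (w : List (Γ ⊕ N)) :
    ∑ Y, w.count (Sum.inr Y) * (expN Y).length ≤ (expandStr expN w).length := by
  induction w with
  | nil => simp [expandStr]
  | cons s w ih =>
    have hs : ∑ Y, (if s = Sum.inr Y then 1 else 0) * (expN Y).length
        ≤ (Sum.elim (fun a => [a]) expN s).length := by
      cases s <;> simp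
    calc ∑ Y, (s :: w).count (Sum.inr Y) * (expN Y).length
        = ∑ Y, w.count (Sum.inr Y) * (expN Y).length
          + ∑ Y, (if s = Sum.inr Y then 1 else 0) * (expN Y).length := by
          simp only [List.count_cons, beq_iff_eq, add_mul, sum_add_distrib]
      _ ≤ (expandStr expN w).length + (Sum.elim (fun a => [a]) expN s).length :=
          add_le_add ih hs
      _ = (expandStr expN (s :: w)).length := by simp [expandStr, add_comm]

theorem sum_occurrences_mul_length_le {Γ N : Type*} [Fintype N] [DecidableEq Γ] [DecidableEq N]
    (rules : N → List (Γ ⊕ N)) (S' : List (Γ ⊕ N)) (expN : N → List Γ) :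
    ∑ Y, (S'.count (Sum.inr Y) + ∑ X, (rules X).count (Sum.inr Y)) * (expN Y).length
      ≤ (expandStr expN S').length + ∑ X, (expandStr expN (rules X)).length := by
  simp only [add_mul, sum_add_distrib, sum_mul]
  rw [sum_comm]
  exact add_le_add (sum_count_mul_length_le_length_expandStr expN S')
    (sum_le_sum fun X _ => sum_count_mul_length_le_length_expandStr expN (rules X))

theorem stmt11 {Γ N : Type*} [Fintype N] [DecidableEq Γ] [DecidableEq N]
    (rules : N → List (Γ ⊕ N)) (S' : List (Γ ⊕ N)) (expN : N → List Γ)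
    (S : List Γ)
    (hexp : ∀ X, expN X = expandStr expN (rules X))
    (hS : S = expandStr expN S')
    (hIG2 : ∀ X : N, 2 ≤ S'.count (Sum.inr X) + ∑ Y, (rules Y).count (Sum.inr X)) :
    (expandStr expN S').length + ∑ X, (expandStr expN (rules X)).length ≤ 2 * S.length := by
  have hrules : ∀ X, (expandStr expN (rules X)).length = (expN X).length := fun X => by rw [← hexp]
  have hocc := sum_occurrences_mul_length_le rules S' expN
  have htwice : 2 * ∑ X, (expN X).length
      ≤ ∑ Y, (S'.count (Sum.inr Y) + ∑ X, (rules X).count (Sum.inr Y)) * (expN Y).length := by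
    rw [mul_sum]
    gcongr with Y
    exact hIG2 Y
  simp only [hrules, ← hS] at hocc ⊢
  omega
end

section
/- During Re-Pair's execution, replacing the most frequent pair never increases the maximum frequency over all pairs: if in string T the pair AB has maximum frequency f among all (non-overlapping-counted) digrams and all occurrences of AB are replaced by a fresh symbol X yielding T', then every digram of T' has frequency at most f. -/
/-- Number of non-overlapping occurrences (counted greedily left to right)
of the digram `ab` in a string. -/
def pairFreq {α : Type*} [DecidableEq α] (a b : α) : List α → ℕ
  | x :: y :: rest =>
      if x = a ∧ y = b then 1 + pairFreq a b rest else pairFreq a b (y :: rest)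
  | _ => 0

/-- Replace all (non-overlapping, leftmost-first) occurrences of the digram `ab`
by the fresh symbol `x`. -/
def replacePair {α : Type*} [DecidableEq α] (a b x : α) : List α → List α
  | u :: v :: rest =>
      if u = a ∧ v = b then x :: replacePair a b x rest
      else u :: replacePair a b x (v :: rest)
  | l => l

/-!
A digram `cd` of `T'` that contains the fresh symbol `x` occurs at most as often as `x` does,
and `x` occurs exactly `pairFreq a b T = f` times. A digram avoiding `x` can only lose
occurrences: each new `x` separates the symbols around it, so the greedy count of `cd` in `T'`
is bounded by its count in `T`, which is at most `f`.
-/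

section Digram

variable {α : Type*} [DecidableEq α]

theorem pairFreq_cons_cons_of_eq {c d u v : α} (h : u = c ∧ v = d) (L : List α) :
    pairFreq c d (u :: v :: L) = 1 + pairFreq c d L := by
  rw [pairFreq, if_pos h]

theorem pairFreq_cons_cons_of_not_eq {c d u v : α} (h : ¬(u = c ∧ v = d)) (L : List α) :
    pairFreq c d (u :: v :: L) = pairFreq c d (v :: L) := by
  rw [pairFreq, if_neg h]

theorem replacePair_cons_cons_of_eq {a b u v : α} (x : α) (h : u = a ∧ v = b) (L : List α) :
    replacePair a b x (u :: v :: L) = x :: replacePair a b x L := by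
  rw [replacePair, if_pos h]

theorem replacePair_cons_cons_of_not_eq {a b u v : α} (x : α) (h : ¬(u = a ∧ v = b))
    (L : List α) : replacePair a b x (u :: v :: L) = u :: replacePair a b x (v :: L) := by
  rw [replacePair, if_neg h]

theorem pairFreq_le_pairFreq_cons (c d v : α) :
    ∀ L : List α, pairFreq c d L ≤ pairFreq c d (v :: L)
  | [] => by simp [pairFreq]
  | [w] => by simp [pairFreq]
  | w :: z :: rest => by
    by_cases hvw : v = c ∧ w = d
    · rw [pairFreq_cons_cons_of_eq hvw]
      by_cases hwz : w = c ∧ z = d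
      · rw [pairFreq_cons_cons_of_eq hwz]
        exact Nat.add_le_add_left (pairFreq_le_pairFreq_cons c d z rest) 1
      · rw [pairFreq_cons_cons_of_not_eq hwz]
        exact Nat.le_add_left _ 1
    · rw [pairFreq_cons_cons_of_not_eq hvw]

theorem pairFreq_cons_of_ne_left {c : α} (d : α) {v : α} (hv : v ≠ c) (L : List α) :
    pairFreq c d (v :: L) = pairFreq c d L := by
  cases L with
  | nil => simp [pairFreq]
  | cons w rest => exact pairFreq_cons_cons_of_not_eq (fun h => hv h.1) rest

theorem pairFreq_le_count_left (c d : α) : ∀ L : List α, pairFreq c d L ≤ L.count c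
  | [] => by simp [pairFreq]
  | [u] => by simp [pairFreq]
  | u :: v :: rest => by
    have hv : (v :: rest).count c ≤ (u :: v :: rest).count c :=
      (List.sublist_cons_self u _).count_le c
    by_cases huv : u = c ∧ v = d
    · have hrest : rest.count c ≤ (v :: rest).count c := (List.sublist_cons_self v _).count_le c
      rw [pairFreq_cons_cons_of_eq huv, huv.1, List.count_cons_self]
      have := pairFreq_le_count_left c d rest
      omega
    · rw [pairFreq_cons_cons_of_not_eq huv]
      exact (pairFreq_le_count_left c d (v :: rest)).trans hv

theorem pairFreq_le_count_right (c d : α) : ∀ L : List α, pairFreq c d L ≤ L.count d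
  | [] => by simp [pairFreq]
  | [u] => by simp [pairFreq]
  | u :: v :: rest => by
    have hv : (v :: rest).count d ≤ (u :: v :: rest).count d :=
      (List.sublist_cons_self u _).count_le d
    by_cases huv : u = c ∧ v = d
    · have hrest : (v :: rest).count d = rest.count d + 1 := by
        rw [huv.2, List.count_cons_self]
      rw [pairFreq_cons_cons_of_eq huv]
      have := pairFreq_le_count_right c d rest
      omega
    · rw [pairFreq_cons_cons_of_not_eq huv]
      exact (pairFreq_le_count_right c d (v :: rest)).trans hv

theorem count_replacePair_of_not_mem (a b x : α) :
    ∀ L : List α, x ∉ L → (replacePair a b x L).count x = pairFreq a b L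
  | [], _ => by simp [replacePair, pairFreq]
  | [u], hx => by
    have hu : u ≠ x := fun h => hx (by simp [h])
    simp [replacePair, pairFreq, hu]
  | u :: v :: rest, hx => by
    have hu : u ≠ x := fun h => hx (by simp [h])
    by_cases huv : u = a ∧ v = b
    · rw [replacePair_cons_cons_of_eq x huv, pairFreq_cons_cons_of_eq huv,
        List.count_cons_self, count_replacePair_of_not_mem a b x rest fun h => hx (by simp [h])]
      omega
    · rw [replacePair_cons_cons_of_not_eq x huv, pairFreq_cons_cons_of_not_eq huv,
        List.count_cons_of_ne hu]
      exact count_replacePair_of_not_mem a b x (v :: rest) fun h => hx (by simp [h])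

/-- The extra head `u` is what makes the induction go through: after a non-replaced symbol the
count continues from it, and taking `u = x` recovers the plain statement on smaller lists. -/
theorem pairFreq_cons_replacePair_le (a b x : α) {c d : α} (hc : c ≠ x) (hd : d ≠ x)
    (u : α) : ∀ L : List α, pairFreq c d (u :: replacePair a b x L) ≤ pairFreq c d (u :: L)
  | [] => by simp [replacePair]
  | [v] => by simp [replacePair]
  | v :: w :: rest => by
    have hxc : x ≠ c := Ne.symm hc
    by_cases hvw : v = a ∧ w = b
    · have hrest := pairFreq_cons_replacePair_le a b x hc hd x rest
      rw [pairFreq_cons_of_ne_left d hxc, pairFreq_cons_of_ne_left d hxc] at hrest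
      rw [replacePair_cons_cons_of_eq x hvw, pairFreq_cons_cons_of_not_eq fun h => hd h.2.symm,
        pairFreq_cons_of_ne_left d hxc]
      calc pairFreq c d (replacePair a b x rest) ≤ pairFreq c d rest := hrest
        _ ≤ pairFreq c d (w :: rest) := pairFreq_le_pairFreq_cons c d w rest
        _ ≤ pairFreq c d (v :: w :: rest) := pairFreq_le_pairFreq_cons c d v _
        _ ≤ pairFreq c d (u :: v :: w :: rest) := pairFreq_le_pairFreq_cons c d u _
    · rw [replacePair_cons_cons_of_not_eq x hvw]
      by_cases huv : u = c ∧ v = d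
      · have hrest := pairFreq_cons_replacePair_le a b x hc hd x (w :: rest)
        rw [pairFreq_cons_of_ne_left d hxc, pairFreq_cons_of_ne_left d hxc] at hrest
        rw [pairFreq_cons_cons_of_eq huv, pairFreq_cons_cons_of_eq huv]
        exact Nat.add_le_add_left hrest 1
      · rw [pairFreq_cons_cons_of_not_eq huv, pairFreq_cons_cons_of_not_eq huv]
        exact pairFreq_cons_replacePair_le a b x hc hd v (w :: rest)

theorem pairFreq_replacePair_le (a b x : α) {c d : α} (hc : c ≠ x) (hd : d ≠ x)
    (L : List α) : pairFreq c d (replacePair a b x L) ≤ pairFreq c d L := by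
  have h := pairFreq_cons_replacePair_le a b x hc hd x L
  rwa [pairFreq_cons_of_ne_left d (Ne.symm hc), pairFreq_cons_of_ne_left d (Ne.symm hc)] at h

end Digram

theorem stmt12 {α : Type*} [DecidableEq α] (T : List α) (a b x : α) (f : ℕ)
    (hfresh : x ∉ T) (hab : pairFreq a b T = f) (hmax : ∀ c d, pairFreq c d T ≤ f) :
    ∀ c d, pairFreq c d (replacePair a b x T) ≤ f := by
  intro c d
  have hcount : (replacePair a b x T).count x = f := by
    rw [count_replacePair_of_not_mem a b x T hfresh, hab]
  by_cases hc : c = x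
  · subst hc
    exact hcount ▸ pairFreq_le_count_left c d _
  by_cases hd : d = x
  · subst hd
    exact hcount ▸ pairFreq_le_count_right c d _
  exact (pairFreq_replacePair_le a b x hc hd T).trans (hmax c d)
end

section
/- For every k > 0 and p ≥ 1 there exists a string S over an alphabet of size σ = 4^p and length σ^{k+1/2} such that: (1) every word w of length i < k satisfies |S|^↻_w = σ^{k-i+1/2}; (2) every word w of length k occurring in S satisfies |S|^↻_w = σ^{1/2}; (3) no word of length k+1 occurs cyclically more than once in S. -/
/-!
Write a letter of `Fin (4 ^ p)` as a pair `(a, b)` of letters of `Fin (2 ^ p)`, and consider the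
directed graph on words of length `k` with an edge `u → v` whenever `v` is obtained from `u` by
dropping its first letter `(a, b)` and appending a letter `(b, c)`. Every vertex has in- and
out-degree `2 ^ p`, and the graph is strongly connected: `u` reaches `v` in `2k` steps through the
word whose `j`-th letter is `(u_j.2, v_j.1)`. An Eulerian circuit therefore exists. Its vertices'
first letters form a cyclic word `S` whose windows of length `k` are the vertices of the circuit,
each visited `2 ^ p` times, and whose windows of length `k + 1` are its edges, each used once.
Shorter words are counted by summing over their one-letter extensions.
-/

/-- Number of cyclic occurrences of `v` in `S` (occurrences may wrap around the end). -/
def occCyc {α : Type*} [DecidableEq α] (S v : List α) : ℕ :=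
  ((List.range S.length).filter (fun i => ((S ++ S).drop i).take v.length = v)).length

open Function Relation

section Circuit

variable {V : Type*}

def cyclicEdges (l : List V) : List (V × V) := l.zip (l.rotate 1)

@[simp]
lemma length_cyclicEdges (l : List V) : (cyclicEdges l).length = l.length := by
  simp [cyclicEdges]

@[simp]
lemma cyclicEdges_nil : cyclicEdges ([] : List V) = [] := rfl

@[simp]
lemma cyclicEdges_eq_nil {l : List V} : cyclicEdges l = [] ↔ l = [] := by
  rw [← List.length_eq_zero_iff, length_cyclicEdges, List.length_eq_zero_iff]

lemma map_fst_cyclicEdges (l : List V) : (cyclicEdges l).map Prod.fst = l :=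
  List.map_fst_zip (by simp)

lemma map_snd_cyclicEdges (l : List V) : (cyclicEdges l).map Prod.snd = l.rotate 1 :=
  List.map_snd_zip (by simp)

lemma fst_mem_of_mem_cyclicEdges {l : List V} {e : V × V} (he : e ∈ cyclicEdges l) : e.1 ∈ l :=
  map_fst_cyclicEdges l ▸ List.mem_map_of_mem he

lemma snd_mem_of_mem_cyclicEdges {l : List V} {e : V × V} (he : e ∈ cyclicEdges l) : e.2 ∈ l :=
  List.mem_rotate.1 (map_snd_cyclicEdges l ▸ List.mem_map_of_mem he)

lemma getElem_cyclicEdges (l : List V) (i : ℕ) (hi : i < l.length) :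
    (cyclicEdges l)[i]'(by simpa using hi) =
      (l[i], l[(i + 1) % l.length]'(Nat.mod_lt _ (by omega))) := by
  simp [cyclicEdges, List.getElem_rotate]

lemma cyclicEdges_map {W : Type*} (f : V → W) (l : List V) :
    cyclicEdges (l.map f) = (cyclicEdges l).map (Prod.map f f) := by
  simp only [cyclicEdges, List.zip_map, ← List.map_rotate]

lemma cyclicEdges_rotate (l : List V) (n : ℕ) :
    cyclicEdges (l.rotate n) = (cyclicEdges l).rotate n := by
  refine List.ext_getElem (by simp) fun i h₁ h₂ => ?_
  simp only [List.getElem_rotate, length_cyclicEdges]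
  rw [getElem_cyclicEdges _ _ (by simpa using h₁),
    getElem_cyclicEdges _ _ (Nat.mod_lt _ (by
      rw [List.length_rotate, length_cyclicEdges] at h₂
      omega))]
  simp only [List.getElem_rotate, List.length_rotate]
  congr 2
  simp only [Nat.mod_add_mod, Nat.add_right_comm]

lemma cyclicEdges_cons (v : V) (a : List V) : cyclicEdges (v :: a) = (v :: a).zip (a ++ [v]) := by
  simp [cyclicEdges, List.rotate_cons_succ]

lemma cyclicEdges_cons_append_cons (v : V) (a b : List V) :
    cyclicEdges (v :: a ++ v :: b) = cyclicEdges (v :: a) ++ cyclicEdges (v :: b) := by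
  rw [cyclicEdges_cons, cyclicEdges_cons, ← List.zip_append (by simp), List.cons_append,
    cyclicEdges_cons]
  simp

lemma exists_rotate_eq_cons {l : List V} {v : V} (h : v ∈ l) : ∃ n t, l.rotate n = v :: t := by
  obtain ⟨s, t, rfl⟩ := List.append_of_mem h
  exact ⟨s.length, t ++ s, by simp [List.rotate_append_length_eq]⟩

lemma exists_cyclicEdges_perm_append {l₁ l₂ : List V} {v : V} (h₁ : v ∈ l₁)
    (h₂ : v ∈ l₂) :
    ∃ l, l ≠ [] ∧ (cyclicEdges l).Perm (cyclicEdges l₁ ++ cyclicEdges l₂) := by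
  obtain ⟨n₁, t₁, ht₁⟩ := exists_rotate_eq_cons h₁
  obtain ⟨n₂, t₂, ht₂⟩ := exists_rotate_eq_cons h₂
  refine ⟨v :: t₁ ++ v :: t₂, by simp, ?_⟩
  rw [cyclicEdges_cons_append_cons, ← ht₁, ← ht₂, cyclicEdges_rotate, cyclicEdges_rotate]
  exact (List.rotate_perm _ _).append (List.rotate_perm _ _)

lemma exists_iterate_mem_periodicPts {α : Type*} [Finite α] (f : α → α) (b : α) :
    ∃ m, f^[m] b ∈ periodicPts f := by
  obtain ⟨m, n, hne, heq⟩ := Finite.exists_ne_map_eq_of_infinite (f^[·] b)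
  wlog hlt : m < n generalizing m n
  · exact this n m hne.symm heq.symm (by omega)
  refine ⟨m, mk_mem_periodicPts (n := n - m) (by omega) ?_⟩
  rw [IsPeriodicPt, IsFixedPt, ← iterate_add_apply, Nat.sub_add_cancel hlt.le]
  exact heq.symm

lemma exists_eq_of_mem_cyclicEdges_periodicOrbit {f : V → V} {x : V} {e : V × V}
    (he : e ∈ cyclicEdges ((List.range (minimalPeriod f x)).map (f^[·] x))) :
    ∃ n, e = (f^[n] x, f^[n + 1] x) := by
  obtain ⟨i, hi, rfl⟩ := List.mem_iff_getElem.1 he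
  rw [getElem_cyclicEdges _ _ (by simpa using hi)]
  simp only [List.getElem_map, List.getElem_range, List.length_map, List.length_range,
    iterate_mod_minimalPeriod_eq]
  exact ⟨i, rfl⟩

lemma nodup_cyclicEdges {l : List V} (hl : l.Nodup) : (cyclicEdges l).Nodup :=
  List.Nodup.of_map Prod.fst (by rwa [map_fst_cyclicEdges])

end Circuit

section Euler

variable {V : Type*} [DecidableEq V]

def IsBalanced (E : Multiset (V × V)) : Prop :=
  ∀ v, E.countP (·.1 = v) = E.countP (·.2 = v)

lemma countP_fst_cyclicEdges (l : List V) (v : V) :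
    (cyclicEdges l : Multiset (V × V)).countP (·.1 = v) = (l : Multiset V).count v := by
  conv_rhs => rw [← map_fst_cyclicEdges l, ← Multiset.map_coe, Multiset.count_map]
  simp only [Multiset.countP_eq_card_filter, eq_comm]

lemma countP_snd_cyclicEdges (l : List V) (v : V) :
    (cyclicEdges l : Multiset (V × V)).countP (·.2 = v) = (l : Multiset V).count v := by
  conv_rhs => rw [← Multiset.coe_eq_coe.2 (List.rotate_perm l 1), ← map_snd_cyclicEdges l,
    ← Multiset.map_coe, Multiset.count_map]
  simp only [Multiset.countP_eq_card_filter, eq_comm]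

lemma isBalanced_cyclicEdges (l : List V) : IsBalanced (cyclicEdges l : Multiset (V × V)) :=
  fun v => by
  rw [countP_fst_cyclicEdges, countP_snd_cyclicEdges]

lemma IsBalanced.sub {E C : Multiset (V × V)} (hE : IsBalanced E) (hC : IsBalanced C)
    (h : C ≤ E) : IsBalanced (E - C) := fun v => by
  rw [Multiset.countP_sub h, Multiset.countP_sub h, hE v, hC v]

lemma IsBalanced.exists_cycle [Finite V] {E : Multiset (V × V)} (hE : IsBalanced E)
    (hne : E ≠ 0) : ∃ l : List V, l ≠ [] ∧ (cyclicEdges l : Multiset (V × V)) ≤ E := by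
  classical
  have hout : ∀ {u v}, (u, v) ∈ E → ∃ w, (v, w) ∈ E := fun {u v} h => by
    have hin : 0 < E.countP (·.2 = v) := Multiset.countP_pos.2 ⟨(u, v), h, rfl⟩
    rw [← hE v] at hin
    obtain ⟨⟨_, w⟩, hw, rfl⟩ := Multiset.countP_pos.1 hin
    exact ⟨w, hw⟩
  let f : V → V := fun v => if h : ∃ w, (v, w) ∈ E then h.choose else v
  have hf : ∀ {u v}, (u, v) ∈ E → (v, f v) ∈ E := fun h => by
    simpa only [f, dif_pos (hout h)] using (hout h).choose_spec
  obtain ⟨⟨a, b⟩, hab⟩ := Multiset.exists_mem_of_ne_zero hne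
  have hiter (n : ℕ) : (f^[n] b, f^[n + 1] b) ∈ E := by
    induction n with
    | zero => exact hf hab
    | succ n ih => rw [iterate_succ_apply' f (n + 1)]; exact hf ih
  obtain ⟨m, hm⟩ := exists_iterate_mem_periodicPts f b
  refine ⟨(List.range (minimalPeriod f (f^[m] b))).map (f^[·] (f^[m] b)),
    by simpa using (minimalPeriod_pos_of_mem_periodicPts hm).ne', ?_⟩
  rw [Multiset.le_iff_subset (Multiset.coe_nodup.2 (nodup_cyclicEdges
    (Cycle.nodup_coe_iff.1 nodup_periodicOrbit)))]
  intro e he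
  obtain ⟨n, rfl⟩ := exists_eq_of_mem_cyclicEdges_periodicOrbit (Multiset.mem_coe.1 he)
  simpa only [← iterate_add_apply, Nat.add_right_comm _ 1 m] using hiter (n + m)

theorem IsBalanced.exists_cycle_decomposition [Finite V] {E : Multiset (V × V)}
    (hE : IsBalanced E) :
    ∃ L : List (List V), (∀ l ∈ L, l ≠ []) ∧
      (L.flatMap cyclicEdges : Multiset (V × V)) = E := by
  induction E using Multiset.strongInductionOn with
  | ih E ih =>
  rcases eq_or_ne E 0 with rfl | hne
  · exact ⟨[], by simp, by simp⟩
  obtain ⟨l, hl, hle⟩ := hE.exists_cycle hne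
  have hlt : E - cyclicEdges l < E := lt_of_le_of_ne tsub_le_self fun h => hl <| by
    simpa [h] using add_tsub_cancel_of_le hle
  obtain ⟨L, hL, hsum⟩ := ih _ hlt (hE.sub (isBalanced_cyclicEdges l) hle)
  refine ⟨l :: L, by simpa [hl] using hL, ?_⟩
  rw [List.flatMap_cons, ← Multiset.coe_add, hsum, add_tsub_cancel_of_le hle]

theorem exists_cyclicEdges_eq_of_decomposition {E : Multiset (V × V)}
    (hconn : ∀ a b, ReflTransGen (fun x y => (x, y) ∈ E) a b) {L : List (List V)} {l : List V}
    (hl : l ≠ []) (hL : ∀ d ∈ L, d ≠ [])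
    (hE : ((l :: L).flatMap cyclicEdges : Multiset (V × V)) = E) :
    ∃ l : List V, (cyclicEdges l : Multiset (V × V)) = E := by
  induction hn : L.length using Nat.strong_induction_on generalizing L l with
  | _ n ih =>
  by_cases hshare : ∃ d ∈ L, ∃ v ∈ l, v ∈ d
  · obtain ⟨d, hd, v, hvl, hvd⟩ := hshare
    obtain ⟨m, hm, hperm⟩ := exists_cyclicEdges_perm_append hvl hvd
    have hlt : (L.erase d).length < n := by
      rw [← hn, List.length_erase_of_mem hd]
      exact Nat.sub_lt (List.length_pos_of_mem hd) one_pos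
    refine ih _ hlt hm (fun d' h => hL d' (List.mem_of_mem_erase h)) ?_ rfl
    rw [← hE, Multiset.coe_eq_coe, List.flatMap_cons, List.flatMap_cons]
    refine (hperm.append_right _).trans ?_
    rw [List.append_assoc]
    exact ((List.perm_cons_erase hd).flatMap_right cyclicEdges).symm.append_left _
  push Not at hshare
  rcases L with _ | ⟨d, L⟩
  · exact ⟨l, by simpa using hE⟩
  -- no circuit of `L` meets `l`, so the vertices of `l` are closed under the edges of `E`
  have hclosed : ∀ x, ReflTransGen (fun x y => (x, y) ∈ E) (l.head hl) x → x ∈ l := by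
    intro x hx
    induction hx with
    | refl => exact List.head_mem hl
    | tail _ hyz ih =>
      rw [← hE, Multiset.mem_coe, List.flatMap_cons, List.mem_append, List.mem_flatMap] at hyz
      rcases hyz with hyz | ⟨d', hd', hyz⟩
      · exact snd_mem_of_mem_cyclicEdges hyz
      · exact absurd (fst_mem_of_mem_cyclicEdges hyz) (hshare d' hd' _ ih)
  have hd : d ∈ d :: L := List.mem_cons_self
  exact (hshare d hd _ (hclosed _ (hconn _ (d.head (hL d hd)))) (List.head_mem _)).elim

theorem IsBalanced.exists_eulerian_circuit [Finite V] {E : Multiset (V × V)} (hE : IsBalanced E)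
    (hconn : ∀ a b, ReflTransGen (fun x y => (x, y) ∈ E) a b) :
    ∃ l : List V, (cyclicEdges l : Multiset (V × V)) = E := by
  obtain ⟨_ | ⟨l, L⟩, hL, hE⟩ := hE.exists_cycle_decomposition
  · exact ⟨[], by simpa using hE⟩
  exact exists_cyclicEdges_eq_of_decomposition hconn (hL l (by simp))
    (fun d hd => hL d (by simp [hd])) hE

end Euler

section Windows

variable {α : Type*}

def cyclicWindows (S : List α) (m : ℕ) : List (List α) :=
  (List.range S.length).map fun i => (S.rotate i).take m

@[simp]
lemma length_cyclicWindows (S : List α) (m : ℕ) : (cyclicWindows S m).length = S.length := by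
  simp [cyclicWindows]

lemma take_drop_append_self {S : List α} {i m : ℕ} (hi : i ≤ S.length) (hm : m ≤ S.length) :
    ((S ++ S).drop i).take m = (S.rotate i).take m := by
  rw [List.drop_append_of_le_length hi, List.rotate_eq_drop_append_take hi, List.take_append,
    List.take_append, List.take_take]
  rw [List.length_drop, Nat.min_eq_left (by omega)]

lemma take_rotate_one {L : List α} {k : ℕ} (hk : k < L.length) :
    (L.rotate 1).take k = (L.take (k + 1)).drop 1 := by
  rw [List.rotate_eq_drop_append_take (by omega),
    List.take_append_of_le_length (by rw [List.length_drop]; omega), List.drop_take,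
    Nat.add_sub_cancel]

lemma map_dropLast_cyclicWindows {S : List α} {m : ℕ} (hm : m < S.length) :
    (cyclicWindows S (m + 1)).map List.dropLast = cyclicWindows S m := by
  simp only [cyclicWindows, List.map_map]
  refine List.map_congr_left fun i _ => ?_
  rw [comp_apply, List.dropLast_eq_take, List.take_take, List.length_take, List.length_rotate]
  congr 1
  omega

lemma map_cyclicWindows_succ {S : List α} {k : ℕ} (hk : k < S.length) :
    (cyclicWindows S (k + 1)).map (fun w => (w.take k, w.drop 1)) =
      cyclicEdges (cyclicWindows S k) := by
  refine List.ext_getElem (by simp) fun i h₁ h₂ => ?_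
  rw [getElem_cyclicEdges _ _ (by simpa using h₂)]
  simp only [cyclicWindows, List.getElem_map, List.getElem_range, List.take_take,
    List.length_map, List.length_range, List.rotate_mod, ← List.rotate_rotate]
  rw [take_rotate_one (by simpa using hk)]
  simp

lemma occCyc_eq_count [DecidableEq α] {S w : List α} (hw : w.length ≤ S.length) :
    occCyc S w = (cyclicWindows S w.length : Multiset (List α)).count w := by
  rw [occCyc, cyclicWindows, ← Multiset.map_coe, Multiset.count_map, Multiset.filter_coe,
    Multiset.coe_card]
  congr 1
  refine List.filter_congr fun i hi => ?_
  rw [take_drop_append_self (List.mem_range.1 hi).le hw]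
  simp [eq_comm]

lemma count_map_dropLast [DecidableEq α] [Fintype α] {W : Multiset (List α)}
    (hW : ∀ x ∈ W, x ≠ []) (w : List α) :
    (W.map List.dropLast).count w = ∑ a, W.count (w ++ [a]) := by
  induction W using Multiset.induction_on with
  | empty => simp
  | cons x W ih =>
    have hx : ∀ a, w ++ [a] = x ↔ w = x.dropLast ∧ a = x.getLast (hW x (by simp)) := by
      intro a
      constructor
      · rintro rfl
        simp
      · rintro ⟨h₁, h₂⟩
        rw [h₁, h₂, List.dropLast_append_getLast]
    simp only [Multiset.map_cons, Multiset.count_cons, Finset.sum_add_distrib, hx,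
      ih fun y hy => hW y (by simp [hy])]
    simp [ite_and, Finset.sum_ite_eq']

lemma occCyc_eq_sum_occCyc_append [DecidableEq α] [Fintype α] {S w : List α}
    (hw : w.length < S.length) : occCyc S w = ∑ a, occCyc S (w ++ [a]) := by
  have hne : ∀ x ∈ cyclicWindows S (w.length + 1), x ≠ [] := by
    simp only [cyclicWindows, List.mem_map, forall_exists_index, and_imp,
      forall_apply_eq_imp_iff₂]
    intro i _
    rw [← List.length_pos_iff, List.length_take, List.length_rotate]
    omega
  rw [occCyc_eq_count hw.le, ← map_dropLast_cyclicWindows hw, ← Multiset.map_coe,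
    count_map_dropLast hne]
  refine Finset.sum_congr rfl fun a _ => ?_
  rw [occCyc_eq_count (by simpa using hw), List.length_append, List.length_singleton]

lemma occCyc_eq_mul_card_pow [DecidableEq α] [Fintype α] {S : List α} {k m : ℕ}
    (hk : k ≤ S.length) (h : ∀ w : List α, w.length = k → occCyc S w = m) :
    ∀ w : List α, w.length ≤ k → occCyc S w = m * Fintype.card α ^ (k - w.length) := by
  intro w hw
  obtain ⟨d, hd⟩ := Nat.exists_eq_add_of_le hw
  induction d generalizing w with
  | zero => simp [h w hd.symm, hd]
  | succ d ih =>
    have happend (a : α) : occCyc S (w ++ [a]) = m * Fintype.card α ^ d := by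
      have hlen : (w ++ [a]).length = w.length + 1 := by simp
      rw [ih (w ++ [a]) (by omega) (by omega), hlen, hd]
      congr 2
      omega
    rw [occCyc_eq_sum_occCyc_append (by omega), Finset.sum_congr rfl fun a _ => happend a,
      Finset.sum_const, Finset.card_univ, smul_eq_mul, hd, Nat.add_sub_cancel_left, pow_succ]
    ring

lemma occCyc_map_equiv {β : Type*} [DecidableEq α] [DecidableEq β] (e : α ≃ β) (S : List α)
    (w : List β) : occCyc (S.map e) w = occCyc S (w.map e.symm) := by
  simp only [occCyc, List.length_map, ← List.map_append, ← List.map_drop, ← List.map_take]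
  congr 1
  refine List.filter_congr fun i _ => ?_
  simp only [decide_eq_decide]
  constructor
  · rintro h; rw [← h]; simp [List.map_map]
  · rintro h; rw [h]; simp [List.map_map]

end Windows

section ShiftWalk

variable {α : Type*} {l : List (List α)} {k : ℕ}

lemma getElem_eq_headD_of_shift (d : α) (hlen : ∀ u ∈ l, u.length = k)
    (hshift : ∀ e ∈ cyclicEdges l, ∃ x, e.2 = e.1.tail ++ [x]) {i j : ℕ} (hi : i < l.length)
    (hj : j < k) :
    l[i][j]'(by rw [hlen _ (List.getElem_mem hi)]; exact hj) =
      (l[(i + j) % l.length]'(Nat.mod_lt _ (by omega))).headD d := by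
  induction j generalizing i with
  | zero =>
    have : 0 < l[i].length := by rw [hlen _ (List.getElem_mem hi)]; exact hj
    simp [Nat.mod_eq_of_lt hi, List.head?_eq_getElem?, this]
  | succ j ih =>
    obtain ⟨x, hx⟩ :=
      hshift _ (List.getElem_mem (l := cyclicEdges l) (n := i) (by simpa using hi))
    simp only [getElem_cyclicEdges _ _ hi] at hx
    have hi' : (i + 1) % l.length < l.length := Nat.mod_lt _ (by omega)
    have hlen' : l[i].length = k := hlen _ (List.getElem_mem hi)
    have hj' : j < l[(i + 1) % l.length].length := by rw [hlen _ (List.getElem_mem hi')]; omega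
    calc l[i][j + 1] = l[(i + 1) % l.length][j] := by
          simp only [hx]
          rw [List.getElem_append_left (by rw [List.length_tail]; omega), List.getElem_tail]
      _ = _ := ih hi' (by omega)
      _ = _ := by simp only [Nat.mod_add_mod, Nat.add_right_comm i 1 j, Nat.add_assoc]

lemma cyclicWindows_map_headD (d : α) (hk : k ≤ l.length) (hlen : ∀ u ∈ l, u.length = k)
    (hshift : ∀ e ∈ cyclicEdges l, ∃ x, e.2 = e.1.tail ++ [x]) :
    cyclicWindows (l.map (·.headD d)) k = l := by
  refine List.ext_getElem (by simp) fun i h₁ h₂ => ?_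
  have hlen' : l[i].length = k := hlen _ (List.getElem_mem h₂)
  refine List.ext_getElem (by simp [cyclicWindows, hlen']; omega) fun j h₃ h₄ => ?_
  rw [getElem_eq_headD_of_shift d hlen hshift h₂ (by omega)]
  simp [cyclicWindows, List.getElem_rotate, Nat.add_comm j i]

end ShiftWalk

section PairShift

variable {β : Type*}

def PairShift (u v : List (β × β)) : Prop :=
  ∃ a b c t, u = (a, b) :: t ∧ v = t ++ [(b, c)]

lemma PairShift.exists_eq_tail_append {u v : List (β × β)} (h : PairShift u v) :
    ∃ x, v = u.tail ++ [x] := by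
  obtain ⟨a, b, c, t, rfl, rfl⟩ := h
  exact ⟨(b, c), rfl⟩

end PairShift

section PairShiftGraph

open Classical in
noncomputable def pairShiftEdges (β : Type*) [Fintype β] (k : ℕ) :
    Finset (List.Vector (β × β) (k + 1) × List.Vector (β × β) (k + 1)) :=
  Finset.univ.filter fun e => PairShift e.1.toList e.2.toList

variable {β : Type*} [Fintype β] {k : ℕ}

lemma mem_pairShiftEdges {e : List.Vector (β × β) (k + 1) × List.Vector (β × β) (k + 1)} :
    e ∈ pairShiftEdges β k ↔ PairShift e.1.toList e.2.toList := by
  simp [pairShiftEdges]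

lemma countP_fst_pairShiftEdges [DecidableEq β] (u : List.Vector (β × β) (k + 1)) :
    (pairShiftEdges β k).val.countP (·.1 = u) = Fintype.card β := by
  obtain ⟨⟨a, b⟩, t, hu⟩ := List.exists_cons_of_length_eq_add_one u.toList_length
  have ht (c : β) : (t ++ [(b, c)]).length = k + 1 := by
    simpa [hu] using u.toList_length
  have hfiber : (pairShiftEdges β k).filter (·.1 = u) =
      (Finset.univ.image fun c => (u, ⟨t ++ [(b, c)], ht c⟩) :
        Finset (List.Vector (β × β) (k + 1) × List.Vector (β × β) (k + 1))) := by
    ext ⟨u', v⟩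
    simp only [Finset.mem_filter, mem_pairShiftEdges, Finset.mem_image, Finset.mem_univ,
      true_and]
    constructor
    · rintro ⟨⟨a', b', c, t', hu', hv⟩, rfl⟩
      rw [hu, List.cons.injEq, Prod.mk.injEq] at hu'
      obtain ⟨⟨rfl, rfl⟩, rfl⟩ := hu'
      exact ⟨c, Prod.ext rfl (List.Vector.toList_injective hv.symm)⟩
    · rintro ⟨c, h⟩
      obtain ⟨rfl, rfl⟩ := Prod.mk.inj h
      exact ⟨⟨a, b, c, t, hu, rfl⟩, rfl⟩
  rw [Multiset.countP_eq_card_filter, ← Finset.filter_val, Finset.card_val, hfiber,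
    Finset.card_image_of_injective _ fun c c' h => by simpa using congrArg (·.2.toList) h,
    Finset.card_univ]

lemma countP_snd_pairShiftEdges [DecidableEq β] (v : List.Vector (β × β) (k + 1)) :
    (pairShiftEdges β k).val.countP (·.2 = v) = Fintype.card β := by
  obtain ⟨t, ⟨b, c⟩, hv⟩ : ∃ t x, v.toList = t ++ [x] := by
    rcases v.toList.eq_nil_or_concat with h | ⟨t, x, h⟩
    · simpa [h] using v.toList_length
    · exact ⟨t, x, by simpa using h⟩
  have ht (a : β) : ((a, b) :: t).length = k + 1 := by
    simpa [hv] using v.toList_length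
  have hfiber : (pairShiftEdges β k).filter (·.2 = v) =
      (Finset.univ.image fun a => (⟨(a, b) :: t, ht a⟩, v) :
        Finset (List.Vector (β × β) (k + 1) × List.Vector (β × β) (k + 1))) := by
    ext ⟨u, v'⟩
    simp only [Finset.mem_filter, mem_pairShiftEdges, Finset.mem_image, Finset.mem_univ,
      true_and]
    constructor
    · rintro ⟨⟨a, b', c', t', hu, hv'⟩, rfl⟩
      rw [hv] at hv'
      obtain ⟨rfl, h⟩ := List.append_inj' hv' rfl
      rw [List.cons.injEq, Prod.mk.injEq] at h
      obtain ⟨⟨rfl, rfl⟩, -⟩ := h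
      exact ⟨a, Prod.ext (List.Vector.toList_injective hu.symm) rfl⟩
    · rintro ⟨a, h⟩
      obtain ⟨rfl, rfl⟩ := Prod.mk.inj h
      exact ⟨⟨a, b, c, t, rfl, hv⟩, rfl⟩
  rw [Multiset.countP_eq_card_filter, ← Finset.filter_val, Finset.card_val, hfiber,
    Finset.card_image_of_injective _ fun a a' h => by simpa using congrArg (·.1.toList) h,
    Finset.card_univ]

lemma isBalanced_pairShiftEdges [DecidableEq β] : IsBalanced (pairShiftEdges β k).val :=
  fun v => by
  rw [countP_fst_pairShiftEdges, countP_snd_pairShiftEdges]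

lemma card_pairShiftEdges [DecidableEq β] :
    (pairShiftEdges β k).card = Fintype.card β ^ (2 * k + 3) := by
  have hfiber (u : List.Vector (β × β) (k + 1)) :
      ((pairShiftEdges β k).filter (·.1 = u)).card = Fintype.card β := by
    rw [← countP_fst_pairShiftEdges u, Multiset.countP_eq_card_filter]
    rfl
  rw [Finset.card_eq_sum_card_fiberwise fun e _ => Finset.mem_univ e.1]
  simp only [hfiber, Finset.sum_const, Finset.card_univ, card_vector, Fintype.card_prod,
    smul_eq_mul]
  ring

lemma reflTransGen_pairShiftEdges_of_compat {u w : List.Vector (β × β) (k + 1)}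
    (h : ∀ j (hu : j < u.toList.length) (hw : j < w.toList.length),
      (w.toList[j]).1 = (u.toList[j]).2) :
    ReflTransGen (fun x y => (x, y) ∈ pairShiftEdges β k) u w := by
  have hlen (m : ℕ) (hm : m ≤ k + 1) : (u.toList.drop m ++ w.toList.take m).length = k + 1 := by
    simp only [List.length_append, List.length_drop, List.Vector.toList_length, List.length_take]
    omega
  have key (m : ℕ) (hm : m ≤ k + 1) :
      ReflTransGen (fun x y => (x, y) ∈ pairShiftEdges β k) u ⟨_, hlen m hm⟩ := by
    induction m with
    | zero => exact (congrArg _ (List.Vector.toList_injective (by simp))).mpr ReflTransGen.refl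
    | succ m ih =>
      refine (ih (by omega)).tail (mem_pairShiftEdges.2 ?_)
      have hmu : m < u.toList.length := by rw [List.Vector.toList_length]; omega
      have hmw : m < w.toList.length := by rw [List.Vector.toList_length]; omega
      refine ⟨(u.toList[m]).1, (u.toList[m]).2, (w.toList[m]).2,
        u.toList.drop (m + 1) ++ w.toList.take m, ?_, ?_⟩
      · exact congrArg (· ++ _) (List.drop_eq_getElem_cons hmu)
      · change u.toList.drop (m + 1) ++ w.toList.take (m + 1) = _
        rw [List.take_add_one, List.getElem?_eq_getElem hmw, ← h m hmu hmw]
        simp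
  have hw : (⟨_, hlen (k + 1) le_rfl⟩ : List.Vector (β × β) (k + 1)) = w := by
    apply List.Vector.toList_injective
    change u.toList.drop (k + 1) ++ w.toList.take (k + 1) = w.toList
    rw [List.drop_eq_nil_of_le (by simp), List.take_of_length_le (by simp), List.nil_append]
  exact hw ▸ key (k + 1) le_rfl

lemma reflTransGen_pairShiftEdges (u v : List.Vector (β × β) (k + 1)) :
    ReflTransGen (fun x y => (x, y) ∈ pairShiftEdges β k) u v := by
  let mid : List.Vector (β × β) (k + 1) :=
    ⟨List.zipWith (fun x y => (x.2, y.1)) u.toList v.toList, by simp⟩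
  exact (reflTransGen_pairShiftEdges_of_compat (w := mid) fun j _ _ => by simp [mid]).trans
    (reflTransGen_pairShiftEdges_of_compat fun j _ _ => by simp [mid])

lemma cyclicWindows_of_cyclicEdges_eq_pairShiftEdges [DecidableEq β]
    {l : List (List.Vector (β × β) (k + 1))}
    (hl : (cyclicEdges l : Multiset _) = (pairShiftEdges β k).val) (hk : k + 1 ≤ l.length)
    (d : β × β) :
    cyclicWindows ((l.map List.Vector.toList).map (·.headD d)) (k + 1) =
      l.map List.Vector.toList := by
  refine cyclicWindows_map_headD d (by simpa using hk) (by simp) ?_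
  rw [cyclicEdges_map]
  intro e he
  obtain ⟨⟨u, v⟩, huv, rfl⟩ := List.mem_map.1 he
  exact (mem_pairShiftEdges.1 (by rw [← Finset.mem_val, ← hl]; exact huv)).exists_eq_tail_append

end PairShiftGraph

theorem exists_cyclic_word_prod (β : Type*) [Fintype β] [DecidableEq β] [Nontrivial β]
    (k : ℕ) :
    ∃ S : List (β × β), S.length = Fintype.card β ^ (2 * k + 3) ∧
      (∀ w, w.length = k + 1 → occCyc S w = Fintype.card β) ∧
      ∀ w, w.length = k + 2 → occCyc S w ≤ 1 := by
  obtain ⟨l, hl⟩ := (isBalanced_pairShiftEdges (β := β) (k := k)).exists_eulerian_circuit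
    reflTransGen_pairShiftEdges
  obtain ⟨d⟩ : Nonempty (β × β) := inferInstance
  have hn : l.length = Fintype.card β ^ (2 * k + 3) := by
    rw [← length_cyclicEdges, ← Multiset.coe_card, hl, Finset.card_val, card_pairShiftEdges]
  have hkn : k + 2 < l.length := by
    calc k + 2 < 2 ^ (2 * k + 3) := Nat.lt_two_pow_self.trans_le' (by omega)
      _ ≤ _ := hn ▸ Nat.pow_le_pow_left Fintype.one_lt_card (2 * k + 3)
  have hwin := cyclicWindows_of_cyclicEdges_eq_pairShiftEdges hl (by omega) d
  set S := (l.map List.Vector.toList).map (·.headD d)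
  have hS : S.length = l.length := by simp [S]
  refine ⟨S, hS.trans hn, fun w hw => ?_, fun w hw => ?_⟩
  · obtain ⟨w, rfl⟩ : ∃ w' : List.Vector (β × β) (k + 1), w'.toList = w :=
      ⟨⟨w, hw⟩, rfl⟩
    rw [occCyc_eq_count (by omega), hw, hwin, ← Multiset.map_coe,
      Multiset.count_map_eq_count' _ _ List.Vector.toList_injective, ← countP_fst_cyclicEdges,
      hl, countP_fst_pairShiftEdges]
  · -- a window of length `k + 2` determines the two consecutive windows of length `k + 1` it
    -- covers, i.e. an edge of the circuit, and the circuit uses each edge once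
    rw [occCyc_eq_count (by omega), hw]
    refine Multiset.nodup_iff_count_le_one.1 (Multiset.coe_nodup.2
      (List.Nodup.of_map (fun w => (w.take (k + 1), w.drop 1)) ?_)) w
    rw [map_cyclicWindows_succ (by omega), hwin, cyclicEdges_map]
    exact (Multiset.coe_nodup.1 (hl ▸ (pairShiftEdges β k).nodup)).map
      (List.Vector.toList_injective.prodMap List.Vector.toList_injective)

/-- Generalized de Bruijn words, case `l = 0`: over the alphabet of size `σ = 4^p`
there is a string of length `σ^(k+1/2) = 2^(p(2k+1))` in which every word of length
`i < k` occurs cyclically exactly `σ^(k-i+1/2) = 2^(p(2(k-i)+1))` times, every word of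
length `k` occurring in `S` occurs cyclically exactly `σ^(1/2) = 2^p` times, and no word
of length `k+1` occurs cyclically more than once. -/
theorem stmt15 (k p : ℕ) (hk : 0 < k) (hp : 1 ≤ p) :
    ∃ S : List (Fin (4 ^ p)),
      S.length = 2 ^ (p * (2 * k + 1)) ∧
      (∀ w : List (Fin (4 ^ p)), w.length < k →
        occCyc S w = 2 ^ (p * (2 * (k - w.length) + 1))) ∧
      (∀ w : List (Fin (4 ^ p)), w.length = k → 0 < occCyc S w → occCyc S w = 2 ^ p) ∧
      (∀ w : List (Fin (4 ^ p)), w.length = k + 1 → occCyc S w ≤ 1) := by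
  obtain ⟨k, rfl⟩ : ∃ k', k = k' + 1 := ⟨k - 1, by omega⟩
  have : Nontrivial (Fin (2 ^ p)) := Fin.nontrivial_iff_two_le.2 (Nat.le_self_pow (by omega) 2)
  let e : Fin (4 ^ p) ≃ Fin (2 ^ p) × Fin (2 ^ p) :=
    (finCongr (by rw [← mul_pow]; norm_num)).trans finProdFinEquiv.symm
  obtain ⟨S, hlen, hocc, hocc'⟩ := exists_cyclic_word_prod (Fin (2 ^ p)) k
  set T := S.map e.symm
  have hT (w : List (Fin (4 ^ p))) : occCyc T w = occCyc S (w.map e) :=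
    occCyc_map_equiv e.symm S w
  have hTk (w : List (Fin (4 ^ p))) (hw : w.length = k + 1) : occCyc T w = 2 ^ p := by
    simpa [hT] using hocc _ (by simpa using hw)
  have hTlen : T.length = (2 ^ p) ^ (2 * k + 3) := by
    rw [List.length_map, hlen, Fintype.card_fin]
  have hkT : k + 1 ≤ T.length := by
    rw [hTlen]
    exact (Nat.lt_pow_self (Nat.one_lt_two_pow (by omega))).le.trans
      (Nat.pow_le_pow_right (by positivity) (by omega))
  refine ⟨T, ?_, fun w hw => ?_, fun w hw _ => hTk w hw, fun w hw => ?_⟩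
  · rw [hTlen, ← pow_mul]
    ring_nf
  · rw [occCyc_eq_mul_card_pow hkT hTk w hw.le, Fintype.card_fin]
    generalize k + 1 - w.length = d
    rw [show (4 : ℕ) = 2 ^ 2 by norm_num, ← pow_mul, ← pow_mul, ← pow_add]
    ring_nf
  · simpa [hT] using hocc' _ (by simpa using hw)
end

section
/- Let S be a string of length n over alphabet of size σ satisfying: for every word w, |S|^↻_w ≤ n/σ^{|w|} if |w| ≤ k, and |S|^↻_w ≤ n/σ^{(|w|+k)/2} if k < |w| ≤ z (where z = k+l+1). Then for every parsing Y_S = y₁…y_m of S with all phrases of length at most z: m·H₀(Y_S) ≥ (n(z+k)/(2z))·log σ - m·log(n/m). -/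
/-!
A phrase `w` occurring `c_w` times in the parsing starts at `c_w` distinct positions of `S`, so
`c_w ≤ |S|^↻_w ≤ n / σ^e` where, in both regimes `|w| ≤ k` and `k < |w| ≤ z`, the exponent `e` is at
least `|w| (z + k) / (2z)`. Taking logarithms, `|w| (z + k) / (2z) · log σ ≤ log (n / c_w)`;
weighting by `c_w` and summing over the distinct phrases gives
`n (z + k) / (2z) · log σ ≤ ∑_w c_w log (n / c_w) = m H₀(Y) + m log (n / m)`.
-/

open Finset

section Occurrences

variable {α : Type*} [DecidableEq α]

def occStarts (S v : List α) : Finset ℕ :=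
  (range S.length).filter fun i => v <+: S.drop i

lemma map_occStarts_subset_occStarts_append (u S v : List α) :
    (occStarts S v).map (addLeftEmbedding u.length) ⊆ occStarts (u ++ S) v := by
  intro i hi
  simp only [mem_map, occStarts, mem_filter, mem_range, addLeftEmbedding_apply] at hi ⊢
  obtain ⟨j, ⟨hjS, hjv⟩, rfl⟩ := hi
  refine ⟨by simp; omega, ?_⟩
  rwa [List.drop_append, List.drop_eq_nil_of_le (by omega), List.nil_append,
    Nat.add_sub_cancel_left]

lemma zero_mem_occStarts_append {v : List α} (hv : v ≠ []) (S : List α) :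
    0 ∈ occStarts (v ++ S) v := by
  simpa [occStarts] using Or.inl (List.length_pos_iff.mpr hv)

lemma card_occStarts_le_occCyc (S v : List α) : #(occStarts S v) ≤ occCyc S v := by
  rw [occCyc, ← List.countP_eq_length_filter, ← Nat.count, Nat.count_eq_card_filter_range]
  refine card_le_card fun i hi ↦ ?_
  simp only [occStarts, mem_filter] at hi ⊢
  refine ⟨hi.1, ?_⟩
  rw [List.drop_append_of_le_length (mem_range.mp hi.1).le]
  exact (List.prefix_iff_eq_take.mp (hi.2.trans (List.prefix_append _ _))).symm

lemma count_le_card_occStarts_flatten (Y : List (List α)) (hne : ∀ y ∈ Y, y ≠ [])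
    (w : List α) : Y.count w ≤ #(occStarts Y.flatten w) := by
  induction Y with
  | nil => simp
  | cons y Y ih =>
    have ih' := ih fun z hz ↦ hne z (List.mem_cons_of_mem _ hz)
    have hshift := map_occStarts_subset_occStarts_append y Y.flatten w
    rw [List.count_cons, List.flatten_cons]
    split_ifs with hyw
    · obtain rfl := beq_iff_eq.mp hyw
      have hw : y ≠ [] := hne y List.mem_cons_self
      have h0 : 0 ∉ (occStarts Y.flatten y).map (addLeftEmbedding y.length) := by
        simp [List.length_pos_iff.mpr hw |>.ne']
      calc Y.count y + 1
          ≤ #((occStarts Y.flatten y).map (addLeftEmbedding y.length)) + 1 := by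
            rw [card_map]; omega
        _ = #(insert 0 ((occStarts Y.flatten y).map (addLeftEmbedding y.length))) :=
            (card_insert_of_notMem h0).symm
        _ ≤ #(occStarts (y ++ Y.flatten) y) :=
            card_le_card (insert_subset (zero_mem_occStarts_append hw _) hshift)
    · exact ih'.trans ((card_map _).ge.trans (card_le_card hshift))

lemma count_le_occCyc_flatten (Y : List (List α)) (hne : ∀ y ∈ Y, y ≠ []) (w : List α) :
    Y.count w ≤ occCyc Y.flatten w :=
  (count_le_card_occStarts_flatten Y hne w).trans (card_occStarts_le_occCyc _ _)

end Occurrences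

section Entropy

variable {α : Type*} [DecidableEq α]

lemma nH0_add_length_mul_logb_div (Y : List α) {N : ℝ} (hN : N ≠ 0) :
    nH0 Y + Y.length * Real.logb 2 (N / Y.length) =
      ∑ a ∈ Y.toFinset, (Y.count a : ℝ) * Real.logb 2 (N / Y.count a) := by
  rcases eq_or_ne Y [] with rfl | hY
  · simp [nH0]
  have hm : (Y.length : ℝ) ≠ 0 := by simpa using hY
  have hc : ∀ a ∈ Y.toFinset, (Y.count a : ℝ) ≠ 0 := fun a ha ↦
    Nat.cast_ne_zero.mpr (List.count_pos_iff.mpr (List.mem_toFinset.mp ha)).ne'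
  have hsum : (Y.length : ℝ) * Real.logb 2 (N / Y.length) =
      ∑ a ∈ Y.toFinset, (Y.count a : ℝ) * Real.logb 2 (N / Y.length) := by
    rw [← sum_mul]
    congr 1
    exact_mod_cast (List.sum_toFinset_count_eq_length Y).symm
  rw [nH0, hsum, ← sum_neg_distrib, ← sum_add_distrib]
  refine sum_congr rfl fun a ha ↦ ?_
  rw [Real.logb_div (hc a ha) hm, Real.logb_div hN hm, Real.logb_div hN (hc a ha)]
  ring

lemma length_flatten_mul_le_nH0_add (Y : List (List α)) {N C : ℝ} (hN : N ≠ 0)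
    (h : ∀ w ∈ Y, w.length * C ≤ Real.logb 2 (N / Y.count w)) :
    Y.flatten.length * C ≤ nH0 Y + Y.length * Real.logb 2 (N / Y.length) := by
  rw [nH0_add_length_mul_logb_div Y hN, List.length_flatten, Finset.sum_list_map_count]
  -- `nH0` counts with the `BEq` coming from `DecidableEq`, `h` with `List.instBEq`
  rw [lawful_beq_subsingleton instBEqOfDecidableEq List.instBEq]
  push_cast [nsmul_eq_mul]
  rw [sum_mul]
  refine sum_le_sum fun w hw ↦ ?_
  rw [mul_assoc]
  exact mul_le_mul_of_nonneg_left (h w (List.mem_toFinset.mp hw)) (Nat.cast_nonneg _)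

end Entropy

lemma mul_logb_le_logb_div_of_le_div_rpow {b σ c n e : ℝ} (hb : 1 < b) (hσ : 0 < σ)
    (hc : 0 < c) (h : c ≤ n / σ ^ e) : e * Real.logb b σ ≤ Real.logb b (n / c) := by
  have hpow : 0 < σ ^ e := Real.rpow_pos_of_pos hσ e
  rw [← Real.logb_rpow_eq_mul_logb_of_pos hσ]
  refine Real.logb_le_logb_of_le hb hpow ?_
  rw [le_div_iff₀ hc, mul_comm]
  rwa [le_div_iff₀ hpow] at h

lemma occCyc_le_div_rpow_of_length_le {Γ : Type*} [DecidableEq Γ] {S w : List Γ} {k l σ n : ℕ}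
    (hσ : 0 < σ)
    (hsmall : ∀ w : List Γ, w.length ≤ k →
      (occCyc S w : ℝ) ≤ (n : ℝ) / (σ : ℝ) ^ w.length)
    (hbig : ∀ w : List Γ, k < w.length → w.length ≤ k + l + 1 →
      (occCyc S w : ℝ) ≤ (n : ℝ) / (σ : ℝ) ^ (((w.length : ℝ) + k) / 2))
    (hw : w.length ≤ k + l + 1) :
    (occCyc S w : ℝ) ≤
      n / (σ : ℝ) ^ (w.length * (((k + l + 1 : ℝ) + k) / (2 * (k + l + 1 : ℝ)))) := by
  obtain ⟨e, hocc, he⟩ : ∃ e : ℝ, (occCyc S w : ℝ) ≤ n / (σ : ℝ) ^ e ∧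
      w.length * (((k + l + 1 : ℝ) + k) / (2 * (k + l + 1 : ℝ))) ≤ e := by
    rcases le_or_gt w.length k with hk | hk
    · refine ⟨w.length, by simpa only [Real.rpow_natCast] using hsmall w hk, ?_⟩
      refine mul_le_of_le_one_right (Nat.cast_nonneg _) ((div_le_one₀ (by positivity)).mpr ?_)
      linarith [(Nat.cast_nonneg l : (0 : ℝ) ≤ l)]
    · refine ⟨(w.length + k) / 2, hbig w hk hw, ?_⟩
      have hwz : (w.length : ℝ) ≤ k + l + 1 := by exact_mod_cast hw
      rw [mul_div_assoc', div_le_div_iff₀ (by positivity) two_pos]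
      nlinarith [(Nat.cast_nonneg k : (0 : ℝ) ≤ k)]
  refine hocc.trans (div_le_div_of_nonneg_left (Nat.cast_nonneg n) (by positivity) ?_)
  exact Real.rpow_le_rpow_of_exponent_le (Nat.one_le_cast.mpr hσ) he

theorem stmt16 {Γ : Type*} [Fintype Γ] [DecidableEq Γ] (S : List Γ) (k l σ n : ℕ)
    (hσ : σ = Fintype.card Γ) (hn : n = S.length)
    (hsmall : ∀ w : List Γ, w.length ≤ k →
      (occCyc S w : ℝ) ≤ (n : ℝ) / (σ : ℝ) ^ w.length)
    (hbig : ∀ w : List Γ, k < w.length → w.length ≤ k + l + 1 →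
      (occCyc S w : ℝ) ≤ (n : ℝ) / (σ : ℝ) ^ (((w.length : ℝ) + k) / 2))
    (Y : List (List Γ)) (hY : Y.flatten = S) (hne : ∀ y ∈ Y, y ≠ [])
    (hlen : ∀ y ∈ Y, y.length ≤ k + l + 1) :
    (n : ℝ) * ((k + l + 1 : ℝ) + k) / (2 * (k + l + 1 : ℝ)) * Real.logb 2 σ -
        (Y.length : ℝ) * Real.logb 2 ((n : ℝ) / (Y.length : ℝ)) ≤
      nH0 Y := by
  subst hY
  rcases eq_or_ne Y [] with rfl | hY
  · simp [nH0, hn]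
  obtain ⟨y, hy⟩ := List.exists_mem_of_ne_nil Y hY
  obtain ⟨a, -⟩ := List.exists_mem_of_ne_nil y (hne y hy)
  have hσ0 : 0 < σ := hσ ▸ Fintype.card_pos_iff.mpr ⟨a⟩
  have hn0 : (n : ℝ) ≠ 0 := by
    rw [hn, Nat.cast_ne_zero, Ne, List.length_eq_zero_iff, List.flatten_eq_nil_iff]
    exact fun h ↦ hne y hy (h y hy)
  set ρ : ℝ := ((k + l + 1 : ℝ) + k) / (2 * (k + l + 1 : ℝ))
  have key := length_flatten_mul_le_nH0_add Y (C := ρ * Real.logb 2 σ) hn0 fun w hw ↦ by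
    rw [← mul_assoc]
    refine mul_logb_le_logb_div_of_le_div_rpow one_lt_two (by exact_mod_cast hσ0)
      (by exact_mod_cast List.count_pos_iff.mpr hw) ?_
    exact (Nat.cast_le.mpr (count_le_occCyc_flatten Y hne w)).trans
      (occCyc_le_div_rpow_of_length_le hσ0 hsmall hbig (hlen w hw))
  rw [← hn] at key
  have hρ : (n : ℝ) * ((k + l + 1 : ℝ) + k) / (2 * (k + l + 1 : ℝ)) = n * ρ := by ring
  rw [hρ, mul_assoc]
  linarith
end

section
/- Let (S', G) be a weakly non-redundant full grammar generating S (obtained from S by a sequence of replacements, each replacing k ≥ 2 non-overlapping occurrences of a word w of length ≥ 2 in the current starting string by a fresh nonterminal). Let Γ be the original alphabet, N the set of nonterminals, and S_G the concatenation of the final starting string S' with all right-hand sides of G. Then |S'|_Γ + 2·|S_G|_N ≤ |S|, where |w|_A counts occurrences in w of symbols from A. -/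
/-!
Each replacement of `k ≥ 2` occurrences of `w` by a fresh nonterminal removes `k·|w|_Γ`
letters and turns `k·|w|_N` nonterminals into `k` nonterminals, while its rule contributes
`|w|_N` nonterminals to `S_G`. Since `k ≥ 2` and `|w| ≥ 2`, the potential
`|S'|_Γ + 2|S'|_N + 2|rules|_N` does not increase, and it starts at `|S|`.
-/

/-- Number of occurrences of original letters in a string over terminals ⊕ nonterminals. -/
def countLetters {Γ : Type*} (w : List (Γ ⊕ ℕ)) : ℕ :=
  (w.filter Sum.isLeft).length

/-- Number of occurrences of nonterminals in a string over terminals ⊕ nonterminals. -/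
def countNonterminals {Γ : Type*} (w : List (Γ ⊕ ℕ)) : ℕ :=
  (w.filter Sum.isRight).length

theorem List.countP_flatten_intersperse {α : Type*} (p : α → Bool) (sep : List α) :
    ∀ parts : List (List α), ((parts.intersperse sep).flatten).countP p =
      (parts.map (countP p)).sum + (parts.length - 1) * sep.countP p
  | [] => by simp
  | [_] => by simp
  | a :: b :: rest => by
    simp only [intersperse_cons_cons, flatten_cons, countP_append,
      countP_flatten_intersperse p sep (b :: rest), map_cons, sum_cons, length_cons,
      Nat.add_sub_cancel]
    ring

section Counting

variable {Γ : Type*}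

theorem countLetters_eq_countP (l : List (Γ ⊕ ℕ)) : countLetters l = l.countP Sum.isLeft :=
  List.countP_eq_length_filter.symm

theorem countNonterminals_eq_countP (l : List (Γ ⊕ ℕ)) :
    countNonterminals l = l.countP Sum.isRight :=
  List.countP_eq_length_filter.symm

theorem countNonterminals_append (l l' : List (Γ ⊕ ℕ)) :
    countNonterminals (l ++ l') = countNonterminals l + countNonterminals l' := by
  simp only [countNonterminals_eq_countP, List.countP_append]

theorem countLetters_add_countNonterminals (l : List (Γ ⊕ ℕ)) :
    countLetters l + countNonterminals l = l.length := by
  rw [List.length_eq_countP_add_countP Sum.isLeft, countLetters_eq_countP,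
    countNonterminals_eq_countP]
  congr 2
  funext x
  cases x <;> rfl

/-- The part of the potential `|S'|_Γ + 2|S_G|_N` carried by a string. -/
def weight (l : List (Γ ⊕ ℕ)) : ℕ :=
  countLetters l + 2 * countNonterminals l

theorem weight_map_inl (S : List Γ) : weight (S.map Sum.inl : List (Γ ⊕ ℕ)) = S.length := by
  simp [weight, countLetters_eq_countP, countNonterminals_eq_countP, List.countP_map,
    Function.comp_def]

theorem weight_replace_add_le {w : List (Γ ⊕ ℕ)} (hw : 2 ≤ w.length)
    {parts : List (List (Γ ⊕ ℕ))} (hparts : 3 ≤ parts.length) (n : ℕ) :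
    weight (parts.intersperse [Sum.inr n]).flatten + 2 * countNonterminals w ≤
      weight (parts.intersperse w).flatten := by
  have hlen := countLetters_add_countNonterminals w
  simp only [weight, countLetters_eq_countP, countNonterminals_eq_countP,
    List.countP_flatten_intersperse] at hlen ⊢
  obtain ⟨k, hk⟩ : ∃ k, parts.length - 1 = k + 2 := ⟨parts.length - 3, by omega⟩
  rw [hk]
  simp only [List.countP_singleton, Sum.isLeft_inr, Sum.isRight_inr, Bool.false_eq_true,
    if_true, if_false]
  nlinarith

end Counting

/-- For a weakly non-redundant grammar obtained from `S` by a sequence of `T`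
replacements (step `t` replaces `k ≥ 2` non-overlapping occurrences of a word `w t`
of length `≥ 2` in the current starting string by the fresh nonterminal `t`),
letting `S' = str T` be the final starting string and `S_G` the concatenation of `S'`
with all right-hand sides, we have `|S'|_Γ + 2|S_G|_N ≤ |S|`. -/
theorem stmt18 {Γ : Type*} (S : List Γ) (T : ℕ) (str : ℕ → List (Γ ⊕ ℕ))
    (w : ℕ → List (Γ ⊕ ℕ))
    (h0 : str 0 = S.map Sum.inl)
    (hstep : ∀ t < T,
      2 ≤ (w t).length ∧
      Sum.inr t ∉ str t ∧
      ∃ parts : List (List (Γ ⊕ ℕ)), 3 ≤ parts.length ∧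
        str t = (List.intersperse (w t) parts).flatten ∧
        str (t + 1) = (List.intersperse [Sum.inr t] parts).flatten)
    (S' SG : List (Γ ⊕ ℕ))
    (hS' : S' = str T)
    (hSG : SG = S' ++ (List.range T).flatMap w) :
    countLetters S' + 2 * countNonterminals SG ≤ S.length := by
  subst hS' hSG
  have invariant : ∀ t ≤ T,
      weight (str t) + 2 * countNonterminals ((List.range t).flatMap w) ≤ S.length := by
    intro t ht
    induction t with
    | zero => simp [h0, weight_map_inl, countNonterminals_eq_countP]
    | succ t ih =>
      obtain ⟨hw, -, parts, hparts, hstr, hstr'⟩ := hstep t ht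
      have step := weight_replace_add_le hw hparts t
      rw [← hstr, ← hstr'] at step
      rw [List.range_succ, List.flatMap_append, List.flatMap_singleton, countNonterminals_append]
      linarith [ih (by omega)]
  have := invariant T le_rfl
  rw [weight] at this
  rw [countNonterminals_append]
  omega
end
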